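/- arXiv:2201.13038 — 6 statements merged into one kernel-verified Lean document; each statement's English description precedes it below -/
import Mathlib

section
/- A subgroup H of a free amalgamated product O *_{O∩L} L is conjugate to a subgroup of O or to a subgroup of L if and only if the lengths of the elements of H are bounded. -/
/-- An alternating (reduced) word: each letter lies in exactly one of the factors
`O`, `L` (outside the amalgamated subgroup `O ⊓ L`), and consecutive letters lie in
different factors. -/
def IsAlternatingWord {G : Type*} [Group G] (O L : Subgroup G) (w : List G) : Prop :=
  (∀ g ∈ w, (g ∈ O ∧ g ∉ L) ∨ (g ∈ L ∧ g ∉ O)) ∧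
  List.Chain' (fun a b => ¬(a ∈ O ∧ b ∈ O) ∧ ¬(a ∈ L ∧ b ∈ L)) w

/-- `G` is the free amalgamated product `O *_{O ⊓ L} L` of its subgroups `O` and `L`:
`O` and `L` generate `G`, and no nonempty alternating word has product `1`. -/
def IsAmalgamatedProduct {G : Type*} [Group G] (O L : Subgroup G) : Prop :=
  O ⊔ L = ⊤ ∧ ∀ w : List G, IsAlternatingWord O L w → w ≠ [] → w.prod ≠ 1

/-- The (syllable) length of `g`: the least number of factors from `O ∪ L` needed to
write `g` as a product. For the amalgamated product this equals the length of a
reduced expression for `g`. -/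
noncomputable def amalLength {G : Type*} [Group G] (O L : Subgroup G) (g : G) : ℕ :=
  sInf {n | ∃ w : List G, w.length = n ∧ (∀ x ∈ w, x ∈ O ∨ x ∈ L) ∧ w.prod = g}

namespace AmalAux

variable {G : Type*} [Group G] (O L : Subgroup G)

/-- inverse-reverse of a word -/
def invRev (w : List G) : List G := (w.map fun x => x⁻¹).reverse

theorem invRev_prod (w : List G) : (invRev w).prod = w.prod⁻¹ := by
  rw [invRev, ← List.prod_inv_reverse]

theorem invRev_length (w : List G) : (invRev w).length = w.length := by
  simp [invRev]

theorem invRev_append (w : List G) (a : G) :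
    invRev (w ++ [a]) = a⁻¹ :: invRev w := by simp [invRev]

theorem invRev_cons (a : G) (w : List G) :
    invRev (a :: w) = invRev w ++ [a⁻¹] := by simp [invRev]

theorem invRev_mem {w : List G} {x : G} (hx : x ∈ invRev w) : x⁻¹ ∈ w := by
  simp only [invRev, List.mem_reverse, List.mem_map] at hx
  obtain ⟨y, hy, rfl⟩ := hx; simpa using hy

theorem alt_symm {w : List G} (h : IsAlternatingWord O L w) : IsAlternatingWord L O w :=
  ⟨fun g hg => (h.1 g hg).symm, h.2.imp fun _ _ hab => ⟨hab.2, hab.1⟩⟩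

theorem alt_invRev {w : List G} (h : IsAlternatingWord O L w) :
    IsAlternatingWord O L (invRev w) := by
  obtain ⟨h1, h2⟩ := h
  constructor
  · intro g hg
    have := h1 g⁻¹ (invRev_mem hg)
    simpa using this
  · rw [invRev, List.Chain', List.isChain_reverse, List.isChain_map]
    refine h2.imp fun a b hab => ?_
    constructor
    · rintro ⟨h1', h2'⟩
      exact hab.1 ⟨by simpa using h2', by simpa using h1'⟩
    · rintro ⟨h1', h2'⟩
      exact hab.2 ⟨by simpa using h2', by simpa using h1'⟩

theorem amal_symm (g : G) : amalLength L O g = amalLength O L g := by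
  unfold amalLength
  congr 1
  ext n
  constructor <;> (rintro ⟨w, h1, h2, h3⟩; exact ⟨w, h1, fun x hx => (h2 x hx).symm, h3⟩)

end AmalAux
namespace AmalAux
variable {G : Type*} [Group G] (O L : Subgroup G)

theorem chain'_head_congr {z z' : G} {t : List G}
    (hO : z' ∈ O ↔ z ∈ O) (hL : z' ∈ L ↔ z ∈ L)
    (h : List.Chain' (fun a b => ¬(a ∈ O ∧ b ∈ O) ∧ ¬(a ∈ L ∧ b ∈ L)) (z :: t)) :
    List.Chain' (fun a b => ¬(a ∈ O ∧ b ∈ O) ∧ ¬(a ∈ L ∧ b ∈ L)) (z' :: t) := by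
  rw [List.Chain', List.isChain_cons] at h ⊢
  exact ⟨fun y hy => ⟨fun hc => (h.1 y hy).1 ⟨hO.mp hc.1, hc.2⟩,
    fun hc => (h.1 y hy).2 ⟨hL.mp hc.1, hc.2⟩⟩, h.2⟩

theorem letter_congr {z z' : G} (hO : z' ∈ O ↔ z ∈ O) (hL : z' ∈ L ↔ z ∈ L)
    (h : (z ∈ O ∧ z ∉ L) ∨ (z ∈ L ∧ z ∉ O)) : (z' ∈ O ∧ z' ∉ L) ∨ (z' ∈ L ∧ z' ∉ O) := by
  tauto

/-- `g` has a word of length `≤ n` that is alternating or short. -/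
def Red (g : G) (n : ℕ) : Prop :=
  ∃ u : List G, u.prod = g ∧ u.length ≤ n ∧
    (IsAlternatingWord O L u ∨ (u.length ≤ 1 ∧ ∀ x ∈ u, x ∈ O ∨ x ∈ L))

theorem Red_symm {g : G} {n : ℕ} (h : Red O L g n) : Red L O g n := by
  obtain ⟨u, h1, h2, h3⟩ := h
  exact ⟨u, h1, h2, h3.imp (alt_symm O L) (fun h => ⟨h.1, fun x hx => (h.2 x hx).symm⟩)⟩

theorem cons_reduce_aux {x g : G} {n : ℕ} (hx : x ∈ O) (h : Red O L g n) :
    Red O L (x * g) (n + 1) := by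
  classical
  obtain ⟨u, hup, hul, hualt⟩ := h
  subst hup
  match u, hul, hualt with
  | [], hul, hualt =>
    exact ⟨[x], by simp, by simp, Or.inr ⟨by simp, by simp [hx]⟩⟩
  | y :: t, hul, hualt =>
    have hmem : ∀ z ∈ y :: t, z ∈ O ∨ z ∈ L := by
      rcases hualt with halt | ⟨_, hm⟩
      · exact fun z hz => (halt.1 z hz).imp And.left And.left
      · exact hm
    by_cases hxL : x ∈ L
    · -- x ∈ A : merge into y
      have hOy : x * y ∈ O ↔ y ∈ O := mul_mem_cancel_left hx
      have hLy : x * y ∈ L ↔ y ∈ L := mul_mem_cancel_left hxL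
      refine ⟨(x * y) :: t, by simp [mul_assoc], by simp at hul ⊢; omega, ?_⟩
      rcases hualt with halt | ⟨hlen1, hm⟩
      · refine Or.inl ⟨?_, chain'_head_congr O L hOy hLy halt.2⟩
        intro g hg
        rcases List.mem_cons.mp hg with rfl | hg
        · exact letter_congr O L hOy hLy (halt.1 y (by simp))
        · exact halt.1 g (by simp [hg])
      · have ht : t = [] := by simpa using hlen1
        subst ht
        refine Or.inr ⟨by simp, ?_⟩
        intro z hz
        rcases List.mem_cons.mp hz with rfl | hz
        · exact (hm y (by simp)).imp (fun h' => hOy.mpr h') (fun h' => hLy.mpr h')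
        · simp at hz
    · -- x ∈ O, x ∉ L
      match t, hul, hualt, hmem with
      | [], hul, hualt, hmem =>
        by_cases hyO : y ∈ O
        · exact ⟨[x * y], by simp, by simp, Or.inr ⟨by simp,
            fun z hz => by rcases List.mem_cons.mp hz with rfl | hz
                           · exact Or.inl (mul_mem hx hyO)
                           · simp at hz⟩⟩
        · have hyL : y ∈ L := (hmem y (by simp)).resolve_left hyO
          refine ⟨[x, y], by simp, by simp at hul ⊢; omega, Or.inl ?_⟩
          constructor
          · intro g hg
            rcases List.mem_cons.mp hg with rfl | hg
            · exact Or.inl ⟨hx, hxL⟩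
            · simp at hg; subst hg; exact Or.inr ⟨hyL, hyO⟩
          · simp only [List.Chain', List.isChain_cons_cons, List.isChain_singleton, and_true]
            exact ⟨fun hc => hyO hc.2, fun hc => hxL hc.1⟩
      | z :: t', hul, hualt, hmem =>
        -- u has length ≥ 2, so it is alternating
        have halt : IsAlternatingWord O L (y :: z :: t') := by
          rcases hualt with halt | ⟨hlen1, _⟩
          · exact halt
          · simp at hlen1
        obtain ⟨h1, h2⟩ := halt
        rw [List.Chain', List.isChain_cons_cons] at h2
        by_cases hyO : y ∈ O
        · have hyL : y ∉ L := by
            rcases h1 y (by simp) with ⟨_, h'⟩ | ⟨_, h'⟩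
            · exact h'
            · exact absurd hyO h'
          have hzL : z ∈ L ∧ z ∉ O := by
            rcases h1 z (by simp) with ⟨h', _⟩ | h'
            · exact absurd ⟨hyO, h'⟩ h2.1.1
            · exact h'
          have hmO : x * y ∈ O := mul_mem hx hyO
          by_cases hmL : x * y ∈ L
          · -- x*y ∈ A : merge into z
            have hOz : x * y * z ∈ O ↔ z ∈ O := mul_mem_cancel_left hmO
            have hLz : x * y * z ∈ L ↔ z ∈ L := mul_mem_cancel_left hmL
            refine ⟨(x * y * z) :: t', by simp [mul_assoc], by simp at hul ⊢; omega, Or.inl ?_⟩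
            constructor
            · intro g hg
              rcases List.mem_cons.mp hg with rfl | hg
              · exact letter_congr O L hOz hLz (h1 z (by simp))
              · exact h1 g (by simp [hg])
            · exact chain'_head_congr O L hOz hLz h2.2
          · -- x*y is O-only : replace head
            refine ⟨(x * y) :: z :: t', by simp [mul_assoc], by simp at hul ⊢; omega, Or.inl ?_⟩
            constructor
            · intro g hg
              rcases List.mem_cons.mp hg with rfl | hg
              · exact Or.inl ⟨hmO, hmL⟩
              · exact h1 g (by simp [hg])
            · rw [List.Chain', List.isChain_cons_cons]
              exact ⟨⟨fun hc => hzL.2 hc.2, fun hc => hmL hc.1⟩, h2.2⟩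
        · have hyL : y ∈ L := by
            rcases h1 y (by simp) with ⟨h', _⟩ | ⟨h', _⟩
            · exact absurd h' hyO
            · exact h'
          refine ⟨x :: y :: z :: t', by simp [mul_assoc], by simp at hul ⊢; omega, Or.inl ?_⟩
          constructor
          · intro g hg
            rcases List.mem_cons.mp hg with rfl | hg
            · exact Or.inl ⟨hx, hxL⟩
            · exact h1 g (by simpa using hg)
          · rw [List.Chain', List.isChain_cons_cons]
            exact ⟨⟨fun hc => hyO hc.2, fun hc => hxL hc.1⟩, List.isChain_cons_cons.mpr h2⟩

theorem cons_reduce {x g : G} {n : ℕ} (hx : x ∈ O ∨ x ∈ L) (h : Red O L g n) :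
    Red O L (x * g) (n + 1) := by
  rcases hx with hx | hx
  · exact cons_reduce_aux O L hx h
  · exact Red_symm L O (cons_reduce_aux L O hx (Red_symm O L h))

theorem word_to_red (w : List G) (hw : ∀ x ∈ w, x ∈ O ∨ x ∈ L) :
    Red O L w.prod w.length := by
  induction w with
  | nil => exact ⟨[], by simp, by simp, Or.inr ⟨by simp, by simp⟩⟩
  | cons x t ih =>
    rw [List.prod_cons]
    exact cons_reduce O L (hw x (by simp))
      (ih (fun z hz => hw z (by simp [hz])))

theorem exists_word (hsup : O ⊔ L = ⊤) (g : G) :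
    ∃ w : List G, (∀ x ∈ w, x ∈ O ∨ x ∈ L) ∧ w.prod = g := by
  have hg : g ∈ Subgroup.closure ((O : Set G) ∪ (L : Set G)) := by
    rw [Subgroup.closure_union, Subgroup.closure_eq, Subgroup.closure_eq, hsup]
    trivial
  induction hg using Subgroup.closure_induction with
  | mem x hx =>
    exact ⟨[x], by simpa using hx, by simp⟩
  | one => exact ⟨[], by simp, by simp⟩
  | mul x y _ _ ihx ihy =>
    obtain ⟨w1, hw1, hp1⟩ := ihx
    obtain ⟨w2, hw2, hp2⟩ := ihy
    exact ⟨w1 ++ w2, fun z hz => by rcases List.mem_append.mp hz with h | h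
                                    · exact hw1 z h
                                    · exact hw2 z h, by simp [hp1, hp2]⟩
  | inv x _ ihx =>
    obtain ⟨w1, hw1, hp1⟩ := ihx
    refine ⟨invRev w1, fun z hz => ?_, by simp [invRev_prod, hp1]⟩
    have := hw1 z⁻¹ (invRev_mem hz)
    simpa using this

theorem amalLength_le {g : G} {w : List G} (hw : ∀ x ∈ w, x ∈ O ∨ x ∈ L)
    (hp : w.prod = g) : amalLength O L g ≤ w.length :=
  Nat.sInf_le ⟨w, rfl, hw, hp⟩

theorem amalLength_spec (hsup : O ⊔ L = ⊤) (g : G) :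
    ∃ w : List G, w.length = amalLength O L g ∧ (∀ x ∈ w, x ∈ O ∨ x ∈ L) ∧ w.prod = g := by
  obtain ⟨w, hw, hp⟩ := exists_word O L hsup g
  have hne : {n | ∃ w : List G, w.length = n ∧ (∀ x ∈ w, x ∈ O ∨ x ∈ L) ∧ w.prod = g}.Nonempty :=
    ⟨w.length, w, rfl, hw, hp⟩
  exact Nat.sInf_mem hne

theorem mem_of_le_one (hsup : O ⊔ L = ⊤) {g : G} (h : amalLength O L g ≤ 1) :
    g ∈ O ∨ g ∈ L := by
  obtain ⟨w, hwl, hwm, hwp⟩ := amalLength_spec O L hsup g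
  match w, hwl, hwm, hwp with
  | [], _, _, hwp => exact Or.inl (by simp [← hwp])
  | [x], _, hwm, hwp => simpa [← hwp] using hwm x (by simp)
  | x :: y :: t, hwl, _, _ => simp at hwl; omega


theorem alt_nil : IsAlternatingWord O L ([] : List G) :=
  ⟨fun g hg => absurd hg (by simp), List.isChain_nil⟩

theorem alt_prefix {s t : List G} (h : IsAlternatingWord O L (s ++ t)) :
    IsAlternatingWord O L s :=
  ⟨fun g hg => h.1 g (by simp [hg]), h.2.prefix (List.prefix_append s t)⟩

theorem alt_suffix {s t : List G} (h : IsAlternatingWord O L (s ++ t)) :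
    IsAlternatingWord O L t :=
  ⟨fun g hg => h.1 g (by simp [hg]), h.2.suffix (List.suffix_append s t)⟩

theorem rel_snd_congr {p b b' : G} (hO : b' ∈ O ↔ b ∈ O) (hL : b' ∈ L ↔ b ∈ L)
    (h : ¬(p ∈ O ∧ b ∈ O) ∧ ¬(p ∈ L ∧ b ∈ L)) :
    ¬(p ∈ O ∧ b' ∈ O) ∧ ¬(p ∈ L ∧ b' ∈ L) := by tauto

theorem chain'_concat_congr {y y' : G} {s : List G}
    (hO : y' ∈ O ↔ y ∈ O) (hL : y' ∈ L ↔ y ∈ L)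
    (h : List.Chain' (fun a b => ¬(a ∈ O ∧ b ∈ O) ∧ ¬(a ∈ L ∧ b ∈ L)) (s ++ [y])) :
    List.Chain' (fun a b => ¬(a ∈ O ∧ b ∈ O) ∧ ¬(a ∈ L ∧ b ∈ L)) (s ++ [y']) := by
  rw [List.Chain', List.isChain_append] at h ⊢
  refine ⟨h.1, List.isChain_singleton _, fun p hp q hq => ?_⟩
  simp only [List.head?_cons, Option.mem_def, Option.some.injEq] at hq
  subst hq
  exact rel_snd_congr O L hO hL (h.2.2 p hp y (by simp))

/-- The last letter of `v'` in an alternating word `v' ++ [b]` with `b ∈ O` is in `L` only. -/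
theorem getLast_type {s v' : List G} {b y : G} (hv : IsAlternatingWord O L (v' ++ [b]))
    (hbO : b ∈ O) (hy : v' = s ++ [y]) : y ∈ L ∧ y ∉ O := by
  subst hy
  have h2 := hv.2
  rw [List.Chain', List.isChain_append] at h2
  have hr := h2.2.2 y (by simp) b (by simp)
  have hyO : y ∉ O := fun hc => hr.1 ⟨hc, hbO⟩
  rcases hv.1 y (by simp) with ⟨h', _⟩ | ⟨h', _⟩
  · exact absurd h' hyO
  · exact ⟨h', hyO⟩

theorem step (hno : ∀ w : List G, IsAlternatingWord O L w → w ≠ [] → w.prod ≠ 1)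
    {w' v' : List G} {a b : G}
    (hw : IsAlternatingWord O L (w' ++ [a])) (hv : IsAlternatingWord O L (v' ++ [b]))
    (ha : a ∈ O) (haL : a ∉ L) (hb : b ∈ O) (hbL : b ∉ L)
    (hp : (w' ++ [a]).prod = (v' ++ [b]).prod) :
    ∃ v₂ : List G, IsAlternatingWord O L v₂ ∧ v₂.length = v'.length ∧ v₂.prod = w'.prod := by
  simp only [List.prod_append, List.prod_cons, List.prod_nil, mul_one] at hp
  have hmO : a * b⁻¹ ∈ O := mul_mem ha (inv_mem hb)
  have hprod' : w'.prod * (a * b⁻¹) = v'.prod := by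
    rw [← mul_assoc, hp, mul_inv_cancel_right]
  by_cases hmL : a * b⁻¹ ∈ L
  · -- a * b⁻¹ is in the amalgamated subgroup
    rcases List.eq_nil_or_concat v' with rfl | ⟨s, y, rfl⟩
    · -- v' = [] : show w' = []
      rcases List.eq_nil_or_concat w' with rfl | ⟨s, x, rfl⟩
      · exact ⟨[], alt_nil O L, rfl, rfl⟩
      · exfalso
        simp only [List.concat_eq_append] at *
        have hx := getLast_type O L hw ha rfl
        have hOx : x * (a * b⁻¹) ∈ O ↔ x ∈ O := mul_mem_cancel_right hmO
        have hLx : x * (a * b⁻¹) ∈ L ↔ x ∈ L := mul_mem_cancel_right hmL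
        refine hno (s ++ [x * (a * b⁻¹)]) ⟨?_, ?_⟩ (by simp) ?_
        · intro g hg
          rcases List.mem_append.mp hg with hg | hg
          · exact hw.1 g (by simp [hg])
          · simp at hg; subst hg
            exact Or.inr ⟨hLx.mpr hx.1, fun hc => hx.2 (hOx.mp hc)⟩
        · exact chain'_concat_congr O L hOx hLx (alt_prefix O L hw).2
        · have : (s ++ [x]).prod * (a * b⁻¹) = 1 := by simpa using hprod'
          simpa [List.prod_append, mul_assoc] using this
    · -- v' = s ++ [y] : absorb a*b⁻¹ into y
      simp only [List.concat_eq_append] at *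
      have hy := getLast_type O L hv hb rfl
      have hOy : y * (a * b⁻¹)⁻¹ ∈ O ↔ y ∈ O := mul_mem_cancel_right (inv_mem hmO)
      have hLy : y * (a * b⁻¹)⁻¹ ∈ L ↔ y ∈ L := mul_mem_cancel_right (inv_mem hmL)
      refine ⟨s ++ [y * (a * b⁻¹)⁻¹], ⟨?_, ?_⟩, by simp, ?_⟩
      · intro g hg
        rcases List.mem_append.mp hg with hg | hg
        · exact hv.1 g (by simp [hg])
        · rw [List.mem_singleton] at hg; subst hg
          exact Or.inr ⟨hLy.mpr hy.1, fun hc => hy.2 (hOy.mp hc)⟩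
      · exact chain'_concat_congr O L hOy hLy (alt_prefix O L hv).2
      · have h3 := hprod'
        simp only [List.prod_append, List.prod_cons, List.prod_nil, mul_one] at h3
        have h4 : w'.prod = s.prod * y * (a * b⁻¹)⁻¹ := by
          rw [← h3, mul_inv_cancel_right]
        rw [h4]
        simp [List.prod_append, mul_assoc]
  · -- a*b⁻¹ is O-only : contradiction
    exfalso
    have hvalt : IsAlternatingWord O L v' := alt_prefix O L hv
    have hinv := alt_invRev O L hvalt
    refine hno (w' ++ (a * b⁻¹) :: invRev v') ⟨?_, ?_⟩ (by simp) ?_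
    · intro g hg
      rcases List.mem_append.mp hg with hg | hg
      · exact hw.1 g (by simp [hg])
      · rcases List.mem_cons.mp hg with rfl | hg
        · exact Or.inl ⟨hmO, hmL⟩
        · exact hinv.1 g hg
    · rw [List.Chain', List.isChain_append]
      refine ⟨(alt_prefix O L hw).2, ?_, fun p hp' q hq => ?_⟩
      · rw [List.isChain_cons]
        refine ⟨fun q hq => ?_, hinv.2⟩
        rcases List.eq_nil_or_concat v' with rfl | ⟨s, y, rfl⟩
        · simp [invRev] at hq
        · simp only [List.concat_eq_append] at *
          have hy := getLast_type O L hv hb rfl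
          rw [invRev_append] at hq
          simp only [List.head?_cons, Option.mem_def, Option.some.injEq] at hq
          subst hq
          exact ⟨fun hc => hy.2 (by simpa using hc.2), fun hc => hmL hc.1⟩
      · simp only [List.head?_cons, Option.mem_def, Option.some.injEq] at hq
        subst hq
        have h2 := hw.2
        rw [List.Chain', List.isChain_append] at h2
        exact rel_snd_congr O L (iff_of_true hmO ha) (iff_of_false hmL haL)
          (h2.2.2 p hp' a rfl)
    · have h5 : w'.prod * (a * b⁻¹) * v'.prod⁻¹ = 1 := by rw [hprod']; simp
      simpa [List.prod_append, invRev_prod, mul_assoc] using h5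


theorem mixed (hno : ∀ w : List G, IsAlternatingWord O L w → w ≠ [] → w.prod ≠ 1)
    {w' v' : List G} {a b : G}
    (hw : IsAlternatingWord O L (w' ++ [a])) (hv : IsAlternatingWord O L (v' ++ [b]))
    (haO : a ∈ O) (haL : a ∉ L) (hbL : b ∈ L) (hbO : b ∉ O)
    (hp : (w' ++ [a]).prod = (v' ++ [b]).prod) : False := by
  have hinv := alt_invRev O L hv
  refine hno ((w' ++ [a]) ++ invRev (v' ++ [b])) ⟨?_, ?_⟩ (by simp [invRev]) ?_
  · intro g hg
    rcases List.mem_append.mp hg with hg | hg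
    · exact hw.1 g hg
    · exact hinv.1 g hg
  · rw [List.Chain', List.isChain_append]
    refine ⟨hw.2, hinv.2, fun p hp' q hq => ?_⟩
    rw [List.getLast?_concat, Option.mem_def, Option.some.injEq] at hp'
    rw [invRev_append, List.head?_cons, Option.mem_def, Option.some.injEq] at hq
    subst hp'; subst hq
    exact ⟨fun hc => hbO (by simpa using hc.2), fun hc => haL hc.1⟩
  · rw [List.prod_append, invRev_prod, hp]
    group

theorem alt_unique : ∀ (n : ℕ) {G : Type*} [Group G] (O L : Subgroup G),
    (∀ w : List G, IsAlternatingWord O L w → w ≠ [] → w.prod ≠ 1) →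
    ∀ w v : List G, IsAlternatingWord O L w → IsAlternatingWord O L v →
      w.length + v.length ≤ n → w.prod = v.prod → w.length = v.length := by
  intro n
  induction n with
  | zero => intro G _ O L hno w v hw hv hlen hp; omega
  | succ n IH =>
    intro G _ O L hno w v hw hv hlen hp
    rcases List.eq_nil_or_concat w with rfl | ⟨w', a, rfl⟩
    · rcases List.eq_nil_or_concat v with rfl | ⟨v', b, rfl⟩
      · rfl
      · exact absurd hp.symm (hno _ hv (by simp))
    · rcases List.eq_nil_or_concat v with rfl | ⟨v', b, rfl⟩
      · exact absurd hp (hno _ hw (by simp))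
      · simp only [List.concat_eq_append] at *
        have hno' : ∀ w : List G, IsAlternatingWord L O w → w ≠ [] → w.prod ≠ 1 :=
          fun u hu => hno u (alt_symm L O hu)
        rcases hw.1 a (by simp) with ⟨haO, haL⟩ | ⟨haL', haO'⟩ <;>
          rcases hv.1 b (by simp) with ⟨hbO, hbL⟩ | ⟨hbL', hbO'⟩
        · obtain ⟨v₂, hv₂, hl₂, hp₂⟩ := step O L hno hw hv haO haL hbO hbL hp
          have := IH O L hno w' v₂ (alt_prefix O L hw) hv₂
            (by simp at hlen; omega) hp₂.symm
          simp only [List.length_append, List.length_cons, List.length_nil]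
          omega
        · exact absurd hp (fun hp => mixed O L hno hw hv haO haL hbL' hbO' hp)
        · exact absurd hp.symm (fun hp => mixed O L hno hv hw hbO hbL haL' haO' hp)
        · obtain ⟨v₂, hv₂, hl₂, hp₂⟩ := step L O hno' (alt_symm O L hw) (alt_symm O L hv)
            haL' haO' hbL' hbO' hp
          have := IH L O hno' w' v₂ (alt_symm O L (alt_prefix O L hw)) hv₂
            (by simp at hlen; omega) hp₂.symm
          simp only [List.length_append, List.length_cons, List.length_nil]
          omega


variable {O L}

/-- An alternating word whose product lies in a factor has length at most 1. -/
theorem alt_short (hno : ∀ w : List G, IsAlternatingWord O L w → w ≠ [] → w.prod ≠ 1)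
    {w : List G} (hw : IsAlternatingWord O L w) (hg : w.prod ∈ O ∨ w.prod ∈ L) :
    w.length ≤ 1 := by
  by_cases hO : w.prod ∈ O <;> by_cases hL : w.prod ∈ L
  · -- product in the amalgamated subgroup
    rcases w with _ | ⟨x, t⟩
    · simp
    · exfalso
      rw [List.prod_cons] at hO hL
      have hOx : (x * t.prod)⁻¹ * x ∈ O ↔ x ∈ O := mul_mem_cancel_left (inv_mem hO)
      have hLx : (x * t.prod)⁻¹ * x ∈ L ↔ x ∈ L := mul_mem_cancel_left (inv_mem hL)
      refine hno (((x * t.prod)⁻¹ * x) :: t) ⟨?_, chain'_head_congr O L hOx hLx hw.2⟩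
        (by simp) ?_
      · intro g hg'
        rcases List.mem_cons.mp hg' with rfl | hg'
        · exact letter_congr O L hOx hLx (hw.1 x (by simp))
        · exact hw.1 g (by simp [hg'])
      · show (x * t.prod)⁻¹ * x * t.prod = 1
        group
  · have halt : IsAlternatingWord O L [w.prod] := by
      refine ⟨?_, List.isChain_singleton _⟩
      intro g hg'; rw [List.mem_singleton] at hg'; subst hg'
      exact Or.inl ⟨hO, hL⟩
    have := alt_unique (w.length + 1) O L hno w [w.prod] hw halt (by simp) (by simp)
    simp at this; omega
  · have halt : IsAlternatingWord O L [w.prod] := by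
      refine ⟨?_, List.isChain_singleton _⟩
      intro g hg'; rw [List.mem_singleton] at hg'; subst hg'
      exact Or.inr ⟨hL, hO⟩
    have := alt_unique (w.length + 1) O L hno w [w.prod] hw halt (by simp) (by simp)
    simp at this; omega
  · rcases hg with hg | hg
    · exact absurd hg hO
    · exact absurd hg hL

/-- The amalgam length of the product of an alternating word is its length. -/
theorem amalLength_alt (hG : IsAmalgamatedProduct O L) {w : List G}
    (hw : IsAlternatingWord O L w) : amalLength O L w.prod = w.length := by
  obtain ⟨hsup, hno⟩ := hG
  refine le_antisymm (amalLength_le O L (fun x hx => (hw.1 x hx).imp And.left And.left) rfl) ?_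
  obtain ⟨w₀, hl₀, hm₀, hp₀⟩ := amalLength_spec O L hsup w.prod
  obtain ⟨u, hup, hul, hualt⟩ := word_to_red O L w₀ hm₀
  rw [hp₀] at hup
  rw [hl₀] at hul
  rcases hualt with halt | ⟨hshort, humem⟩
  · have := alt_unique (w.length + u.length) O L hno w u hw halt le_rfl hup.symm
    omega
  · -- u is short
    match u, hup, hshort, humem with
    | [], hup, _, _ =>
      have : w = [] := by
        by_contra hne
        exact hno w hw hne (by rw [← hup, List.prod_nil])
      simp [this]
    | [x], hup, hshort, humem =>
      have hx : w.prod ∈ O ∨ w.prod ∈ L := by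
        have h6 := humem x (by simp)
        rw [← hup]
        simpa using h6
      have hlen1 : w.length ≤ 1 := alt_short hno hw hx
      simp at hul
      omega
    | x :: y :: t, _, hshort, _ => simp at hshort

theorem exists_alt (hG : IsAmalgamatedProduct O L) {g : G} (h2 : 2 ≤ amalLength O L g) :
    ∃ w : List G, IsAlternatingWord O L w ∧ w.prod = g ∧ w.length = amalLength O L g := by
  obtain ⟨w₀, hl₀, hm₀, hp₀⟩ := amalLength_spec O L hG.1 g
  obtain ⟨u, hup, hul, hualt⟩ := word_to_red O L w₀ hm₀
  rw [hp₀] at hup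
  rw [hl₀] at hul
  rcases hualt with halt | ⟨hshort, humem⟩
  · refine ⟨u, halt, hup, le_antisymm hul ?_⟩
    rw [← hup]
    exact amalLength_le O L (fun x hx => (halt.1 x hx).imp And.left And.left) rfl
  · exfalso
    have : amalLength O L g ≤ u.length := amalLength_le O L humem hup
    omega

/-- Types of letters in an alternating word strictly alternate. -/
theorem alt_parity {w : List G} (hw : IsAlternatingWord O L w) (hne : w ≠ []) :
    ((w.head hne ∈ O ↔ w.getLast hne ∈ O) ↔ Odd w.length) := by
  induction w with
  | nil => exact absurd rfl hne
  | cons x t IH =>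
    match t, hw with
    | [], _ => simp
    | y :: t', hw =>
      have hch := hw.2
      rw [List.Chain', List.isChain_cons_cons] at hch
      have hxy : x ∈ O ↔ y ∉ O := by
        constructor
        · intro hx hy; exact hch.1.1 ⟨hx, hy⟩
        · intro hy
          rcases hw.1 x (by simp) with ⟨h', _⟩ | ⟨h', _⟩
          · exact h'
          · exfalso
            rcases hw.1 y (by simp) with ⟨h'', _⟩ | ⟨h'', _⟩
            · exact hy h''
            · exact hch.1.2 ⟨h', h''⟩
      have htail : IsAlternatingWord O L (y :: t') :=
        ⟨fun g hg => hw.1 g (by simp [hg]), hch.2⟩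
      have IH' := IH htail (by simp)
      rw [List.head_cons] at IH'
      have hgl : (x :: y :: t').getLast hne = (y :: t').getLast (by simp) :=
        List.getLast_cons (by simp)
      have hparity : Odd ((y :: t').length + 1) ↔ ¬ Odd (y :: t').length := by
        rw [Nat.odd_add_one]
      rw [List.head_cons, hgl, List.length_cons, hparity, ← IH']
      tauto

theorem alt_pow (hG : IsAmalgamatedProduct O L) {w : List G}
    (hw : IsAlternatingWord O L w) (hne : w ≠ [])
    (hdiff : ¬(w.head hne ∈ O ↔ w.getLast hne ∈ O)) (m : ℕ) :
    amalLength O L (w.prod ^ (m + 1)) = (m + 1) * w.length := by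
  -- first letter and last letter have different types
  have key : ∀ m : ℕ, ∃ u : List G, IsAlternatingWord O L u ∧ u.prod = w.prod ^ (m + 1) ∧
      u.length = (m + 1) * w.length ∧ u.head? = w.head? := by
    intro m
    induction m with
    | zero => exact ⟨w, hw, by simp, by simp, rfl⟩
    | succ k IHk =>
      obtain ⟨u, hu, hup, hulen, huh⟩ := IHk
      refine ⟨w ++ u, ⟨?_, ?_⟩, ?_, ?_, ?_⟩
      · intro g hg
        rcases List.mem_append.mp hg with hg | hg
        · exact hw.1 g hg
        · exact hu.1 g hg
      · rw [List.Chain', List.isChain_append]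
        refine ⟨hw.2, hu.2, fun p hp' q hq => ?_⟩
        rw [List.getLast?_eq_getLast hne, Option.mem_def, Option.some.injEq] at hp'
        rw [huh, List.head?_eq_head hne, Option.mem_def, Option.some.injEq] at hq
        subst hp'; subst hq
        have hlast := hw.1 (w.getLast hne) (List.getLast_mem hne)
        have hhead := hw.1 (w.head hne) (List.head_mem hne)
        constructor
        · rintro ⟨h1, h2⟩; exact hdiff ⟨fun _ => h1, fun _ => h2⟩
        · rintro ⟨h1, h2⟩
          rcases hlast with ⟨h3, h4⟩ | ⟨h3, h4⟩
          · exact h4 h1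
          · rcases hhead with ⟨h5, h6⟩ | ⟨h5, h6⟩
            · exact h6 h2
            · exact hdiff ⟨fun hc => absurd hc h6, fun hc => absurd hc h4⟩
      · rw [List.prod_append, hup, ← pow_succ']
      · simp [hulen]; ring
      · rcases w with _ | ⟨x, t⟩
        · exact absurd rfl hne
        · simp

  obtain ⟨u, hu, hup, hulen, _⟩ := key m
  rw [← hup, amalLength_alt hG hu, hulen]


theorem alt_tail {a : G} {w' : List G} (hw : IsAlternatingWord O L (a :: w')) :
    IsAlternatingWord O L w' :=
  ⟨fun g hg => hw.1 g (by simp [hg]), hw.2.tail⟩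

theorem no_even (hG : IsAmalgamatedProduct O L) {H : Subgroup G} {N : ℕ}
    (hb : ∀ h ∈ H, amalLength O L h ≤ N) {h : G} (hh : h ∈ H)
    (h2 : 2 ≤ amalLength O L h) : ¬ Even (amalLength O L h) := by
  intro heven
  obtain ⟨w, hw, hwp, hwl⟩ := exists_alt hG h2
  have hne : w ≠ [] := by
    intro hc; rw [hc] at hwl; simp at hwl; omega
  have hdiff : ¬(w.head hne ∈ O ↔ w.getLast hne ∈ O) := by
    rw [alt_parity hw hne, hwl]
    exact Nat.not_odd_iff_even.mpr heven
  have hpow := alt_pow hG hw hne hdiff N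
  rw [hwp] at hpow
  have hb' := hb (h ^ (N + 1)) (pow_mem hh (N + 1))
  rw [hpow] at hb'
  have hw2 : 2 ≤ w.length := by omega
  have := Nat.mul_le_mul_left (N + 1) hw2
  omega

theorem word_mul_right (u : List G) (hne : u ≠ []) (hm : ∀ x ∈ u, x ∈ O ∨ x ∈ L)
    {β : G} (hβO : β ∈ O) (hβL : β ∈ L) :
    ∃ u' : List G, (∀ x ∈ u', x ∈ O ∨ x ∈ L) ∧ u'.length = u.length ∧
      u'.prod = u.prod * β := by
  induction u with
  | nil => exact absurd rfl hne
  | cons x t IH =>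
    by_cases ht : t = []
    · subst ht
      refine ⟨[x * β], ?_, by simp, by simp⟩
      intro z hz; rw [List.mem_singleton] at hz; subst hz
      rcases hm x (by simp) with h | h
      · exact Or.inl (mul_mem h hβO)
      · exact Or.inr (mul_mem h hβL)
    · obtain ⟨t', h1, h2, h3⟩ := IH ht (fun z hz => hm z (by simp [hz]))
      refine ⟨x :: t', ?_, by simp [h2], by simp [h3, mul_assoc]⟩
      intro z hz
      rcases List.mem_cons.mp hz with rfl | hz
      · exact hm z (by simp)
      · exact h1 z hz

theorem word_conjA (u : List G) (hne : u ≠ []) (hm : ∀ x ∈ u, x ∈ O ∨ x ∈ L)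
    {α β : G} (hα : α ∈ O ⊓ L) (hβ : β ∈ O ⊓ L) :
    ∃ u' : List G, (∀ x ∈ u', x ∈ O ∨ x ∈ L) ∧ u'.length = u.length ∧
      u'.prod = α * u.prod * β := by
  obtain ⟨u₂, h1, h2, h3⟩ := word_mul_right u hne hm hβ.1 hβ.2
  have hne₂ : u₂ ≠ [] := by
    intro hc; rw [hc] at h2; simp at h2; exact hne (List.length_eq_zero_iff.mp h2.symm)
  rcases u₂ with _ | ⟨x, t⟩
  · exact absurd rfl hne₂
  · refine ⟨(α * x) :: t, ?_, by simpa using h2, ?_⟩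
    · intro z hz
      rcases List.mem_cons.mp hz with rfl | hz
      · rcases h1 x (by simp) with h | h
        · exact Or.inl (mul_mem hα.1 h)
        · exact Or.inr (mul_mem hα.2 h)
      · exact h1 z (by simp [hz])
    · rw [List.prod_cons, mul_assoc, ← List.prod_cons, h3, ← mul_assoc]

theorem subgroup_union {H : Subgroup G} (hsub : ∀ h ∈ H, h ∈ O ∨ h ∈ L) :
    (∀ h ∈ H, h ∈ O) ∨ (∀ h ∈ H, h ∈ L) := by
  by_contra hc
  push_neg at hc
  obtain ⟨⟨x, hxH, hxO⟩, ⟨y, hyH, hyL⟩⟩ := hc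
  have hxL : x ∈ L := (hsub x hxH).resolve_left hxO
  have hyO : y ∈ O := (hsub y hyH).resolve_right hyL
  rcases hsub (x * y) (mul_mem hxH hyH) with h | h
  · refine hxO ?_
    have := mul_mem h (inv_mem hyO)
    simpa using this
  · refine hyL ?_
    have := mul_mem (inv_mem hxL) h
    simpa using this


theorem key (hG : IsAmalgamatedProduct O L) (H : Subgroup G) {N : ℕ}
    (hb : ∀ h ∈ H, amalLength O L h ≤ N)
    {h₀ : G} (hh₀ : h₀ ∈ H) (hmax : ∀ h ∈ H, amalLength O L h ≤ amalLength O L h₀)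
    (h2 : 2 ≤ amalLength O L h₀)
    {a : G} {w' : List G} (hw : IsAlternatingWord O L (a :: w'))
    (hprod : (a :: w').prod = h₀) (hlen : (a :: w').length = amalLength O L h₀)
    (haO : a ∈ O) :
    ∀ h ∈ H, amalLength O L (a⁻¹ * h * a) + 2 ≤ amalLength O L h₀ := by
  have hno := hG.2
  set M := amalLength O L h₀ with hM
  have haL : a ∉ L := by
    rcases hw.1 a (by simp) with ⟨_, h'⟩ | ⟨_, h'⟩
    · exact h'
    · exact absurd haO h'
  have hModd : ¬ Even M := no_even hG hb hh₀ h2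
  have hM3 : 3 ≤ M := by
    have := Nat.odd_iff.mp (Nat.not_even_iff_odd.mp hModd)
    omega
  have hwne : (a :: w') ≠ [] := by simp
  have hlen2 : w'.length + 1 = M := by simpa using hlen
  set z := (a :: w').getLast hwne with hz
  have hzO : z ∈ O := by
    have hpar := alt_parity hw hwne
    rw [hlen] at hpar
    have : (a :: w').head hwne ∈ O ↔ z ∈ O :=
      hpar.mpr (Nat.not_even_iff_odd.mp hModd)
    rw [List.head_cons] at this
    exact this.mp haO
  have hzL : z ∉ L := by
    rcases hw.1 z (List.getLast_mem hwne) with ⟨_, h'⟩ | ⟨_, h'⟩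
    · exact h'
    · exact absurd hzO h'
  -- Step A : every length-≤1 element of H lies in O
  have stepA : ∀ k ∈ H, k ∈ L → k ∈ O := by
    intro k hk hkL
    by_contra hkO
    have halt : IsAlternatingWord O L ((a :: w') ++ [k]) := by
      refine ⟨?_, ?_⟩
      · intro g hg
        rcases List.mem_append.mp hg with hg | hg
        · exact hw.1 g hg
        · rw [List.mem_singleton] at hg; subst hg
          exact Or.inr ⟨hkL, hkO⟩
      · rw [List.Chain', List.isChain_append]
        refine ⟨hw.2, List.isChain_singleton _, fun p hp q hq => ?_⟩
        rw [List.getLast?_eq_getLast hwne, Option.mem_def, Option.some.injEq] at hp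
        rw [List.head?_cons, Option.mem_def, Option.some.injEq] at hq
        subst hp; subst hq
        exact ⟨fun hc => hkO hc.2, fun hc => hzL hc.1⟩
    have hlen' := amalLength_alt hG halt
    have hmem' : h₀ * k ∈ H := mul_mem hh₀ hk
    have := hmax (h₀ * k) hmem'
    rw [show ((a :: w') ++ [k]).prod = h₀ * k by simp [← hprod, mul_assoc]] at hlen'
    rw [hlen'] at this
    simp at this
    omega
  -- Step B : heads of long elements of H lie in the coset a(O ⊓ L)
  have stepB : ∀ k ∈ H, ∀ (b : G) (v' : List G), IsAlternatingWord O L (b :: v') →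
      (b :: v').prod = k → v' ≠ [] → b ∈ O ∧ b ∉ L ∧ a⁻¹ * b ∈ O ⊓ L := by
    intro k hk b v' hv hvp hv'ne
    have hbmem := hv.1 b (by simp)
    have hbO : b ∈ O := by
      by_contra hbO
      have hbL : b ∈ L := by
        rcases hbmem with ⟨h', _⟩ | ⟨h', _⟩
        · exact absurd h' hbO
        · exact h'
      have halt : IsAlternatingWord O L ((a :: w') ++ (b :: v')) := by
        refine ⟨?_, ?_⟩
        · intro g hg
          rcases List.mem_append.mp hg with hg | hg
          · exact hw.1 g hg
          · exact hv.1 g hg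
        · rw [List.Chain', List.isChain_append]
          refine ⟨hw.2, hv.2, fun p hp q hq => ?_⟩
          rw [List.getLast?_eq_getLast hwne, Option.mem_def, Option.some.injEq] at hp
          rw [List.head?_cons, Option.mem_def, Option.some.injEq] at hq
          subst hp; subst hq
          exact ⟨fun hc => hbO hc.2, fun hc => hzL hc.1⟩
      have hlen' := amalLength_alt hG halt
      rw [show ((a :: w') ++ (b :: v')).prod = h₀ * k by
        simp [← hprod, ← hvp, mul_assoc]] at hlen'
      have := hmax (h₀ * k) (mul_mem hh₀ hk)
      rw [hlen'] at this
      simp at this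
      omega
    have hbL : b ∉ L := by
      rcases hbmem with ⟨_, h'⟩ | ⟨_, h'⟩
      · exact h'
      · exact absurd hbO h'
    have habO : a⁻¹ * b ∈ O := mul_mem (inv_mem haO) hbO
    refine ⟨hbO, hbL, habO, ?_⟩
    by_contra habL
    -- contradiction word : invRev w' ++ (a⁻¹b) :: v'
    have hw'ne : w' ≠ [] := by
      intro hc; rw [hc] at hlen; simp at hlen; omega
    rcases w' with _ | ⟨c, t⟩
    · exact absurd rfl hw'ne
    · have hcL : c ∈ L ∧ c ∉ O := by
        have hch := hw.2
        rw [List.Chain', List.isChain_cons_cons] at hch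
        rcases hw.1 c (by simp) with ⟨h', _⟩ | h'
        · exact absurd ⟨haO, h'⟩ hch.1.1
        · exact h'
      have halt : IsAlternatingWord O L (invRev (c :: t) ++ (a⁻¹ * b) :: v') := by
        have hwt : IsAlternatingWord O L (c :: t) := alt_tail hw
        have hinv := alt_invRev O L hwt
        refine ⟨?_, ?_⟩
        · intro g hg
          rcases List.mem_append.mp hg with hg | hg
          · exact hinv.1 g hg
          · rcases List.mem_cons.mp hg with rfl | hg
            · exact Or.inl ⟨habO, habL⟩
            · exact hv.1 g (by simp [hg])
        · rw [List.Chain', List.isChain_append]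
          refine ⟨hinv.2, ?_, fun p hp q hq => ?_⟩
          · exact chain'_head_congr O L (iff_of_true habO hbO) (iff_of_false habL hbL) hv.2
          · rw [invRev_cons, List.getLast?_concat, Option.mem_def, Option.some.injEq] at hp
            rw [List.head?_cons, Option.mem_def, Option.some.injEq] at hq
            subst hp; subst hq
            constructor
            · rintro ⟨h1', _⟩; exact hcL.2 (by simpa using h1')
            · rintro ⟨_, h2'⟩; exact habL h2'
      have hlen' := amalLength_alt hG halt
      have hprodeq : (invRev (c :: t) ++ (a⁻¹ * b) :: v').prod = h₀⁻¹ * k := by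
        rw [List.prod_append, invRev_prod, List.prod_cons, ← hprod, ← hvp]
        simp [List.prod_cons]
        group
      rw [hprodeq] at hlen'
      have := hmax (h₀⁻¹ * k) (mul_mem (inv_mem hh₀) hk)
      rw [hlen'] at this
      simp [invRev_length] at this
      have hv'pos : 1 ≤ v'.length := List.length_pos_iff.mpr hv'ne
      have hd : (c :: t).length = t.length + 1 := by simp
      omega
  -- Now the final computation
  intro h hh
  by_cases hsh : amalLength O L h ≤ 1
  · have hhO : h ∈ O := by
      rcases mem_of_le_one O L hG.1 hsh with h' | h'
      · exact h'
      · exact stepA h hh h'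
    have hmem : a⁻¹ * h * a ∈ O := mul_mem (mul_mem (inv_mem haO) hhO) haO
    have : amalLength O L (a⁻¹ * h * a) ≤ 1 := by
      refine amalLength_le O L (w := [a⁻¹ * h * a]) ?_ (by simp)
      intro x hx; rw [List.mem_singleton] at hx; subst hx; exact Or.inl hmem
    omega
  · push_neg at hsh
    have hlh2 : 2 ≤ amalLength O L h := hsh
    obtain ⟨v, hv, hvp, hvl⟩ := exists_alt hG hlh2
    have hlodd : ¬ Even (amalLength O L h) := no_even hG hb hh hlh2
    have hlh3 : 3 ≤ amalLength O L h := by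
      have := Nat.odd_iff.mp (Nat.not_even_iff_odd.mp hlodd)
      omega
    rcases v with _ | ⟨b, v₁⟩
    · simp at hvl; omega
    · rcases List.eq_nil_or_concat v₁ with rfl | ⟨v'', y, rfl⟩
      · simp at hvl; omega
      · simp only [List.concat_eq_append] at *
        have hv₁ne : v'' ++ [y] ≠ [] := by simp
        obtain ⟨hbO, hbL, hab⟩ := stepB h hh b (v'' ++ [y]) hv hvp hv₁ne
        -- last-letter coset via h⁻¹
        have hinv := alt_invRev O L hv
        have hinvp : (invRev (b :: (v'' ++ [y]))).prod = h⁻¹ := by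
          rw [invRev_prod, hvp]
        have hinvshape : invRev (b :: (v'' ++ [y])) = y⁻¹ :: (invRev v'' ++ [b⁻¹]) := by
          rw [invRev_cons, invRev_append]
          simp
        rw [hinvshape] at hinv hinvp
        obtain ⟨_, _, hya⟩ := stepB h⁻¹ (inv_mem hh) y⁻¹ (invRev v'' ++ [b⁻¹]) hinv hinvp
          (by simp)
        have hβ : y * a ∈ O ⊓ L := by
          have := inv_mem hya
          simpa [mul_inv_rev] using this
        have hv''ne : v'' ≠ [] := by
          intro hc; rw [hc] at hvl; simp at hvl; omega
        obtain ⟨u', hu'm, hu'l, hu'p⟩ := word_conjA v'' hv''ne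
          (fun x hx => ((hv.1 x (by simp [hx])).imp And.left And.left)) hab hβ
        have hfin : amalLength O L (a⁻¹ * h * a) ≤ v''.length := by
          refine hu'l ▸ amalLength_le O L hu'm ?_
          rw [hu'p, ← hvp]
          simp [List.prod_append]
          group
        have hvlen : v''.length + 2 = amalLength O L h := by
          simp at hvl; omega
        have hle := hmax h hh
        omega


theorem amal_prod_symm (hG : IsAmalgamatedProduct O L) : IsAmalgamatedProduct L O :=
  ⟨by rw [sup_comm]; exact hG.1, fun w hw => hG.2 w (alt_symm L O hw)⟩

/-- The branch of the main induction where the chosen maximal element starts in `O`. -/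
theorem branch {G : Type*} [Group G] (O L : Subgroup G) (hG : IsAmalgamatedProduct O L)
    (H : Subgroup G) (N : ℕ) (hb : ∀ h ∈ H, amalLength O L h ≤ N)
    (IH : ∀ m, m < N → ∀ (O' L' : Subgroup G), IsAmalgamatedProduct O' L' →
      ∀ H' : Subgroup G, (∀ h ∈ H', amalLength O' L' h ≤ m) →
      (∃ c : G, ∀ h ∈ H', c * h * c⁻¹ ∈ O') ∨ (∃ c : G, ∀ h ∈ H', c * h * c⁻¹ ∈ L'))
    {h₀ : G} (hh₀ : h₀ ∈ H) (hmax : ∀ h ∈ H, amalLength O L h ≤ amalLength O L h₀)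
    (h2 : 2 ≤ amalLength O L h₀)
    {a : G} {w' : List G} (hv : IsAlternatingWord O L (a :: w'))
    (hvp : (a :: w').prod = h₀) (hvl : (a :: w').length = amalLength O L h₀)
    (haO : a ∈ O) :
    (∃ c : G, ∀ h ∈ H, c * h * c⁻¹ ∈ O) ∨ (∃ c : G, ∀ h ∈ H, c * h * c⁻¹ ∈ L) := by
  have hk := key hG H hb hh₀ hmax h2 hv hvp hvl haO
  have hN2 : 2 ≤ N := le_trans h2 (hb h₀ hh₀)
  set H' := H.map (MulAut.conj a⁻¹).toMonoidHom with hH'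
  have hb' : ∀ k ∈ H', amalLength O L k ≤ N - 1 := by
    intro k hk'
    rw [hH', Subgroup.mem_map] at hk'
    obtain ⟨h, hh, rfl⟩ := hk'
    have h1 := hk h hh
    have h2' := hb h₀ hh₀
    show amalLength O L ((MulAut.conj a⁻¹) h) ≤ N - 1
    rw [MulAut.conj_apply, inv_inv]
    omega
  have hconj : ∀ (c : G), ∀ h ∈ H, c * ((MulAut.conj a⁻¹) h) * c⁻¹
      = (c * a⁻¹) * h * (c * a⁻¹)⁻¹ := by
    intro c h _
    rw [MulAut.conj_apply]
    group
  rcases IH (N - 1) (by omega) O L hG H' hb' with ⟨c, hc⟩ | ⟨c, hc⟩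
  · refine Or.inl ⟨c * a⁻¹, fun h hh => ?_⟩
    have hmem : (MulAut.conj a⁻¹).toMonoidHom h ∈ H' := Subgroup.mem_map.mpr ⟨h, hh, rfl⟩
    have := hc _ hmem
    rw [show ((MulAut.conj a⁻¹).toMonoidHom h : G) = (MulAut.conj a⁻¹) h from rfl] at this
    rw [← hconj c h hh]
    exact this
  · refine Or.inr ⟨c * a⁻¹, fun h hh => ?_⟩
    have hmem : (MulAut.conj a⁻¹).toMonoidHom h ∈ H' := Subgroup.mem_map.mpr ⟨h, hh, rfl⟩
    have := hc _ hmem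
    rw [show ((MulAut.conj a⁻¹).toMonoidHom h : G) = (MulAut.conj a⁻¹) h from rfl] at this
    rw [← hconj c h hh]
    exact this

theorem main : ∀ (N : ℕ) {G : Type*} [Group G] (O L : Subgroup G),
    IsAmalgamatedProduct O L → ∀ H : Subgroup G, (∀ h ∈ H, amalLength O L h ≤ N) →
    (∃ c : G, ∀ h ∈ H, c * h * c⁻¹ ∈ O) ∨ (∃ c : G, ∀ h ∈ H, c * h * c⁻¹ ∈ L) := by
  intro N
  induction N using Nat.strong_induction_on with
  | _ N IH =>
    intro G _ O L hG H hb
    by_cases hall : ∀ h ∈ H, amalLength O L h ≤ 1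
    · have hsub : ∀ h ∈ H, h ∈ O ∨ h ∈ L := fun h hh => mem_of_le_one O L hG.1 (hall h hh)
      rcases subgroup_union hsub with h' | h'
      · exact Or.inl ⟨1, fun h hh => by simpa using h' h hh⟩
      · exact Or.inr ⟨1, fun h hh => by simpa using h' h hh⟩
    · push_neg at hall
      obtain ⟨h₁, hh₁, hl₁⟩ := hall
      classical
      obtain ⟨h₀, hh₀, hMdef⟩ :=
        Nat.findGreatest_spec (P := fun n => ∃ h ∈ H, amalLength O L h = n)
          (hb h₁ hh₁) ⟨h₁, hh₁, rfl⟩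
      have hmax : ∀ h ∈ H, amalLength O L h ≤ amalLength O L h₀ := by
        intro h hh
        rw [hMdef]
        exact Nat.le_findGreatest (hb h hh) ⟨h, hh, rfl⟩
      have h2 : 2 ≤ amalLength O L h₀ := le_trans (by omega) (hmax h₁ hh₁)
      obtain ⟨v, hv, hvp, hvl⟩ := exists_alt hG h2
      rcases v with _ | ⟨a, w'⟩
      · simp at hvl; omega
      · rcases hv.1 a (by simp) with ⟨haO, _⟩ | ⟨haL, _⟩
        · exact branch O L hG H N hb (fun m hm => IH m hm) hh₀ hmax h2 hv hvp hvl haO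
        · have hG' := amal_prod_symm hG
          have hb' : ∀ h ∈ H, amalLength L O h ≤ N := by
            intro h hh; rw [amal_symm O L]; exact hb h hh
          have hmax' : ∀ h ∈ H, amalLength L O h ≤ amalLength L O h₀ := by
            intro h hh; rw [amal_symm O L, amal_symm O L]; exact hmax h hh
          have h2' : 2 ≤ amalLength L O h₀ := by rw [amal_symm O L]; exact h2
          have hvl' : (a :: w').length = amalLength L O h₀ := by
            rw [amal_symm O L]; exact hvl
          exact (branch L O hG' H N hb' (fun m hm => IH m hm) hh₀ hmax' h2' (alt_symm O L hv) hvp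
            hvl' haL).symm

end AmalAux



theorem bound_of_conj {G : Type*} [Group G] (O L : Subgroup G)
    (hsup : O ⊔ L = ⊤) (H : Subgroup G) (c : G)
    (hc : ∀ h ∈ H, c * h * c⁻¹ ∈ O ∨ c * h * c⁻¹ ∈ L) :
    ∃ N : ℕ, ∀ h ∈ H, amalLength O L h ≤ N := by
  obtain ⟨wc, hwcm, hwcp⟩ := AmalAux.exists_word O L hsup c
  refine ⟨2 * wc.length + 1, fun h hh => ?_⟩
  have hle := AmalAux.amalLength_le O L
    (w := AmalAux.invRev wc ++ (c * h * c⁻¹) :: wc) (g := h) ?_ ?_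
  · rw [List.length_append, List.length_cons, AmalAux.invRev_length] at hle
    omega
  · intro x hx
    rcases List.mem_append.mp hx with hx | hx
    · have := hwcm x⁻¹ (AmalAux.invRev_mem hx)
      rcases this with h' | h'
      · exact Or.inl (by simpa using inv_mem h')
      · exact Or.inr (by simpa using inv_mem h')
    · rcases List.mem_cons.mp hx with rfl | hx
      · exact hc h hh
      · exact hwcm x hx
  · rw [List.prod_append, AmalAux.invRev_prod, List.prod_cons, hwcp]
    group


/-- A cyclically reduced element: its length is even and at least `2`
(equivalently, its reduced expression starts and ends in different factors). -/
def IsCyclicallyReduced {G : Type*} [Group G] (O L : Subgroup G) (g : G) : Prop :=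
  2 ≤ amalLength O L g ∧ Even (amalLength O L g)

/-- A subgroup `H` of a free amalgamated product `O *_{O ⊓ L} L` is conjugate to a
subgroup of `O` or of `L` if and only if the lengths of its elements are bounded. -/
theorem conjugate_into_factor_iff_bounded_length
    {G : Type*} [Group G] (O L : Subgroup G)
    (hG : IsAmalgamatedProduct O L) (H : Subgroup G) :
    ((∃ c : G, ∀ h ∈ H, c * h * c⁻¹ ∈ O) ∨ (∃ c : G, ∀ h ∈ H, c * h * c⁻¹ ∈ L)) ↔
      ∃ N : ℕ, ∀ h ∈ H, amalLength O L h ≤ N := by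
  constructor
  · rintro (⟨c, hc⟩ | ⟨c, hc⟩)
    · exact bound_of_conj O L hG.1 H c (fun h hh => Or.inl (hc h hh))
    · exact bound_of_conj O L hG.1 H c (fun h hh => Or.inr (hc h hh))
  · rintro ⟨N, hN⟩
    exact AmalAux.main N O L hG H hN
end

section
/- Let 𝒢 be a topological group that is (abstractly) a free amalgamated product O *_{O∩L} L of two closed subgroups O and L, and let φ : ℝ → 𝒢 be a continuous group homomorphism. Then φ(ℝ) is conjugate in 𝒢 to a subgroup of O or to a subgroup of L. -/
open SimpleGraph

namespace AmalProof

variable {G : Type*} [Group G]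

/-- Vertices of the Bass–Serre tree. -/
abbrev AmalV (O L : Subgroup G) : Type _ := (G ⧸ O) ⊕ (G ⧸ L)

variable (O L : Subgroup G)

/-- `x` represents the coset vertex `v`. -/
def rep (x : G) : AmalV O L → Prop
  | .inl a => (QuotientGroup.mk x : G ⧸ O) = a
  | .inr b => (QuotientGroup.mk x : G ⧸ L) = b

def adj : AmalV O L → AmalV O L → Prop
  | .inl a, .inr b => ∃ g : G, rep O L g (.inl a) ∧ rep O L g (.inr b)
  | .inr b, .inl a => ∃ g : G, rep O L g (.inl a) ∧ rep O L g (.inr b)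
  | _, _ => False

/-- The Bass–Serre tree of the amalgam. -/
def graph : SimpleGraph (AmalV O L) where
  Adj := adj O L
  symm := ⟨by rintro (a | b) (a' | b') h <;> simp only [adj] at h ⊢ <;> tauto⟩
  loopless := ⟨by rintro (a | b) h <;> exact h⟩

variable {O L}

lemma adj_witness {u v : AmalV O L} (h : (graph O L).Adj u v) :
    ∃ g : G, rep O L g u ∧ rep O L g v := by
  rcases u with a | b <;> rcases v with a' | b' <;>
    simp only [graph, adj] at h <;> tauto

lemma adj_of_rep {x : G} {a : G ⧸ O} {b : G ⧸ L} (h1 : rep O L x (.inl a))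
    (h2 : rep O L x (.inr b)) : (graph O L).Adj (.inl a) (.inr b) :=
  ⟨x, h1, h2⟩

/-- The action of `G` on the vertices. -/
def act (g : G) : AmalV O L → AmalV O L
  | .inl a => .inl (g • a)
  | .inr b => .inr (g • b)

@[simp] lemma act_one (v : AmalV O L) : act (1 : G) v = v := by
  rcases v with a | b <;> simp [act]

lemma act_mul (g h : G) (v : AmalV O L) : act (g * h) v = act g (act h v) := by
  rcases v with a | b <;> simp [act, mul_smul]

lemma act_rep {x g : G} {v : AmalV O L} (h : rep O L x v) :
    rep O L (g * x) (act g v) := by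
  rcases v with a | b <;> simp only [rep, act] at h ⊢ <;> rw [← h] <;> rfl

lemma act_adj (g : G) {u v : AmalV O L} (h : (graph O L).Adj u v) :
    (graph O L).Adj (act g u) (act g v) := by
  rcases u with a | b <;> rcases v with a' | b' <;>
    simp only [graph, adj] at h ⊢ <;>
  · obtain ⟨x, h1, h2⟩ := h
    exact ⟨g * x, act_rep h1, act_rep h2⟩

lemma act_leftInverse (g : G) :
    Function.LeftInverse (act (O := O) (L := L) g⁻¹) (act g) := fun v => by
  rw [← act_mul, inv_mul_cancel, act_one]

lemma act_injective (g : G) : Function.Injective (act (O := O) (L := L) g) :=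
  (act_leftInverse g).injective

/-- `act g` as a graph homomorphism. -/
def actHom (g : G) : graph O L →g graph O L where
  toFun := act g
  map_rel' := act_adj g

@[simp] lemma actHom_apply (g : G) (v : AmalV O L) : actHom g v = act g v := rfl

def typ : AmalV O L → Bool
  | .inl _ => true
  | .inr _ => false

lemma typ_act (g : G) (v : AmalV O L) : typ (act g v) = typ v := by
  rcases v with a | b <;> rfl

lemma adj_typ {u v : AmalV O L} (h : (graph O L).Adj u v) : typ v = !typ u := by
  rcases u with a | b <;> rcases v with a' | b' <;> first | rfl | exact absurd h (by exact id)



section GraphHelpers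
variable {V : Type*} {Γ : SimpleGraph V}

lemma getVert_mem_support {u v : V} (p : Γ.Walk u v) (i : ℕ) :
    p.getVert i ∈ p.support := by
  induction p generalizing i with
  | nil => cases i <;> simp [Walk.getVert]
  | cons h p ih =>
    cases i with
    | zero => simp
    | succ n =>
      rw [Walk.getVert_cons_succ, Walk.support_cons]
      exact List.mem_cons_of_mem _ (ih n)

lemma getVert_map {V' : Type*} {Γ' : SimpleGraph V'} (f : Γ →g Γ') {u v : V}
    (p : Γ.Walk u v) (i : ℕ) : (p.map f).getVert i = f (p.getVert i) := by
  induction p generalizing i with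
  | nil => cases i <;> rfl
  | cons h p ih =>
    cases i with
    | zero => simp
    | succ n => rw [Walk.map_cons, Walk.getVert_cons_succ, Walk.getVert_cons_succ]; exact ih n

lemma path_getVert_ne {u v : V} {p : Γ.Walk u v} (hp : p.IsPath) {i j : ℕ}
    (hij : i < j) (hj : j ≤ p.length) : p.getVert i ≠ p.getVert j := by
  induction p generalizing i j with
  | nil => simp at hj; omega
  | cons h p ih =>
    rcases j with _ | j; · omega
    rcases i with _ | i
    · rw [Walk.getVert_zero, Walk.getVert_cons_succ]
      intro he
      exact ((Walk.cons_isPath_iff _ _).mp hp).2 (he ▸ getVert_mem_support p j)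
    · rw [Walk.getVert_cons_succ, Walk.getVert_cons_succ]
      exact ih hp.of_cons (by omega) (by simpa [Walk.length_cons] using hj)

end GraphHelpers

variable {G : Type*} [Group G] (O L : Subgroup G)

/-- letter in exactly the factor specified by `b`. -/
def Pc : Bool → G → Prop
  | true, c => c ∈ O ∧ c ∉ L
  | false, c => c ∈ L ∧ c ∉ O

/-- `w` is an alternating word whose letters' factors start as `b` and alternate,
with next expected factor `b'`. -/
def AltChain : Bool → List G → Bool → Prop
  | b, [], b' => b = b'
  | b, c :: w, b' => Pc O L b c ∧ AltChain (!b) w b'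

variable {O L}

lemma altChain_alternating : ∀ {b b' : Bool} {w : List G},
    AltChain O L b w b' → IsAlternatingWord O L w := by
  intro b b' w
  induction w generalizing b with
  | nil => intro _; exact ⟨by simp, List.isChain_nil⟩
  | cons c w ih =>
    rintro ⟨hc, hch⟩
    have ihw := ih hch
    constructor
    · intro g hg
      rw [List.mem_cons] at hg
      rcases hg with rfl | hg
      · cases b <;> simp only [Pc] at hc <;> tauto
      · exact ihw.1 g hg
    · rcases w with _ | ⟨c2, w'⟩
      · exact List.isChain_singleton c
      · refine List.isChain_cons_cons.mpr ⟨?_, ihw.2⟩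
        obtain ⟨hc2, _⟩ := hch
        cases b <;> simp only [Pc, Bool.not_true, Bool.not_false] at hc hc2 <;> tauto

lemma altChain_append {b b' : Bool} {w : List G} {c : G} (h : AltChain O L b w b')
    (hc : Pc O L b' c) : AltChain O L b (w ++ [c]) (!b') := by
  induction w generalizing b with
  | nil => cases h; exact ⟨hc, rfl⟩
  | cons d w ih => exact ⟨h.1, ih h.2⟩

lemma rep_mem_O {x y : G} {a : G ⧸ O} (h1 : rep O L x (.inl a)) (h2 : rep O L y (.inl a)) :
    x⁻¹ * y ∈ O := QuotientGroup.eq.mp (by simpa [rep] using h1.trans h2.symm)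

lemma rep_mem_L {x y : G} {b : G ⧸ L} (h1 : rep O L x (.inr b)) (h2 : rep O L y (.inr b)) :
    x⁻¹ * y ∈ L := QuotientGroup.eq.mp (by simpa [rep] using h1.trans h2.symm)

lemma rep_eq_O {x y : G} {a a' : G ⧸ O} (h1 : rep O L x (.inl a)) (h2 : rep O L y (.inl a'))
    (h : x⁻¹ * y ∈ O) : a = a' := by
  simp only [rep] at h1 h2
  rw [← h1, ← h2]; exact QuotientGroup.eq.mpr h

lemma rep_eq_L {x y : G} {b b' : G ⧸ L} (h1 : rep O L x (.inr b)) (h2 : rep O L y (.inr b'))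
    (h : x⁻¹ * y ∈ L) : b = b' := by
  simp only [rep] at h1 h2
  rw [← h1, ← h2]; exact QuotientGroup.eq.mpr h

lemma adj_to_inl {a : G ⧸ O} {v : AmalV O L} (h : (graph O L).Adj v (.inl a)) :
    ∃ b, v = .inr b := by
  rcases v with a' | b
  · exact absurd h (by exact id)
  · exact ⟨b, rfl⟩

lemma adj_to_inr {b : G ⧸ L} {v : AmalV O L} (h : (graph O L).Adj v (.inr b)) :
    ∃ a, v = .inl a := by
  rcases v with a | b'
  · exact ⟨a, rfl⟩
  · exact absurd h (by exact id)

lemma adj_from_inl {a : G ⧸ O} {v : AmalV O L} (h : (graph O L).Adj (.inl a) v) :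
    ∃ b, v = .inr b := adj_to_inl ((graph O L).adj_symm h)

lemma adj_from_inr {b : G ⧸ L} {v : AmalV O L} (h : (graph O L).Adj (.inr b) v) :
    ∃ a, v = .inl a := adj_to_inr ((graph O L).adj_symm h)

/-- The key extraction of an alternating word from a path in the graph. -/
lemma walk_word {u' v : AmalV O L} (q : (graph O L).Walk u' v) :
    ∀ {u : AmalV O L} (h : (graph O L).Adj u u') (x : G), rep O L x u → rep O L x u' →
    q.IsPath → u ≠ q.getVert 1 →
    ∃ (y : G) (w : List G), y = x * w.prod ∧ w.length = q.length ∧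
      AltChain O L (typ u') w (typ v) ∧ rep O L y v ∧
      rep O L y ((Walk.cons h q).getVert q.length) := by
  induction q with
  | nil =>
    intro u h x hxu hxu' _ _
    exact ⟨x, [], by simp, rfl, rfl, hxu', by simpa using hxu⟩
  | @cons u' u'' v h' q'' ih =>
    intro u h x hxu hxu' hq hne
    obtain ⟨x'', hx''u', hx''u''⟩ := adj_witness h'
    set c := x⁻¹ * x'' with hc_def
    have hne2 : u ≠ u'' := by simpa using hne
    have hpc : Pc O L (typ u') c := by
      rcases u' with a' | b'
      · obtain ⟨bu, rfl⟩ := adj_to_inl h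
        obtain ⟨bu'', rfl⟩ := adj_from_inl h'
        refine ⟨rep_mem_O hxu' hx''u', fun hcL => ?_⟩
        exact hne2 (by rw [rep_eq_L hxu hx''u'' hcL])
      · obtain ⟨au, rfl⟩ := adj_to_inr h
        obtain ⟨au'', rfl⟩ := adj_from_inr h'
        refine ⟨rep_mem_L hxu' hx''u', fun hcO => ?_⟩
        exact hne2 (by rw [rep_eq_O hxu hx''u'' hcO])
    have hne' : u' ≠ q''.getVert 1 := by
      cases q'' with
      | nil => simpa [Walk.getVert] using (graph O L).ne_of_adj h'
      | cons h3 q3 =>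
        intro he
        exact ((Walk.cons_isPath_iff _ _).mp hq).2 (he ▸ getVert_mem_support _ 1)
    obtain ⟨y, w', hy, hlen, hchain, hrepv, hreppen⟩ :=
      ih h' x'' hx''u' hx''u'' hq.of_cons hne'
    refine ⟨y, c :: w', ?_, by simp [hlen], ?_, hrepv, ?_⟩
    · rw [hy, List.prod_cons, ← mul_assoc, hc_def, mul_inv_cancel_left]
    · exact ⟨hpc, by rwa [← adj_typ h'] ⟩
    · rw [Walk.length_cons, Walk.getVert_cons_succ]
      exact hreppen

lemma tree_acyclic (hfree : ∀ w : List G, IsAlternatingWord O L w → w ≠ [] → w.prod ≠ 1) :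
    (graph O L).IsAcyclic := by
  intro v c hc
  cases c with
  | nil => simpa using hc.three_le_length
  | @cons _ u' _ h q =>
    have hq : q.IsPath := by
      rw [Walk.isPath_def]
      simpa using hc.support_nodup
    have hlen : 2 ≤ q.length := by
      have := hc.three_le_length
      rw [Walk.length_cons] at this; omega
    obtain ⟨x, hxv, hxu'⟩ := adj_witness h
    have hvlast : q.getVert q.length = v := q.getVert_length
    have hne : v ≠ q.getVert 1 := by
      intro he
      exact path_getVert_ne hq (i := 1) (j := q.length) (by omega) le_rfl (by rw [← he, hvlast])
    obtain ⟨y, w, hy, hwlen, hchain, hrepv, hreppen⟩ := walk_word q h x hxv hxu' hq hne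
    set cl := y⁻¹ * x with hcl_def
    have hpen1 : (Walk.cons h q).getVert q.length = q.getVert (q.length - 1) := by
      obtain ⟨n, hn⟩ : ∃ n, q.length = n + 1 := ⟨q.length - 1, by omega⟩
      rw [hn]
      simp [Walk.getVert_cons_succ]
    have hne2 : u' ≠ (Walk.cons h q).getVert q.length := by
      rw [hpen1]
      have := path_getVert_ne hq (i := 0) (j := q.length - 1) (by omega) (by omega)
      simpa using this
    have hpc : Pc O L (typ v) cl := by
      rcases v with a | b
      · obtain ⟨b1, hb1⟩ := adj_from_inl h
        have hadjpen : (graph O L).Adj ((Walk.cons h q).getVert q.length) (.inl a) := by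
          have h2 := (Walk.cons h q).adj_getVert_succ (i := q.length)
            (by rw [Walk.length_cons]; omega)
          have h3 : (Walk.cons h q).getVert (q.length + 1) = Sum.inl a := by
            have := (Walk.cons h q).getVert_length
            rwa [Walk.length_cons] at this
          rwa [h3] at h2
        obtain ⟨b2, hb2⟩ := adj_to_inl hadjpen
        refine ⟨rep_mem_O hrepv hxv, fun hclL => ?_⟩
        refine hne2 (hb1.trans (Eq.trans ?_ hb2.symm))
        exact congrArg Sum.inr (rep_eq_L (hb2 ▸ hreppen) (hb1 ▸ hxu') hclL).symm
      · obtain ⟨a1, ha1⟩ := adj_from_inr h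
        have hadjpen : (graph O L).Adj ((Walk.cons h q).getVert q.length) (.inr b) := by
          have h2 := (Walk.cons h q).adj_getVert_succ (i := q.length)
            (by rw [Walk.length_cons]; omega)
          have h3 : (Walk.cons h q).getVert (q.length + 1) = Sum.inr b := by
            have := (Walk.cons h q).getVert_length
            rwa [Walk.length_cons] at this
          rwa [h3] at h2
        obtain ⟨a2, ha2⟩ := adj_to_inr hadjpen
        refine ⟨rep_mem_L hrepv hxv, fun hclO => ?_⟩
        refine hne2 (ha1.trans (Eq.trans ?_ ha2.symm))
        exact congrArg Sum.inl (rep_eq_O (ha2 ▸ hreppen) (ha1 ▸ hxu') hclO).symm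
    have hchain2 : AltChain O L (typ u') (w ++ [cl]) (!typ v) := altChain_append hchain hpc
    refine hfree (w ++ [cl]) (altChain_alternating hchain2) (by simp) ?_
    rw [List.prod_append, List.prod_cons, List.prod_nil, mul_one, hcl_def]
    have : w.prod = x⁻¹ * y := by rw [hy]; group
    rw [this]; group




section Words

lemma exists_word (hsup : O ⊔ L = ⊤) (g : G) :
    ∃ w : List G, (∀ x ∈ w, x ∈ O ∨ x ∈ L) ∧ w.prod = g := by
  have hg : g ∈ Subgroup.closure ((O : Set G) ∪ (L : Set G)) := by
    rw [← Subgroup.sup_eq_closure, hsup]; trivial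
  induction hg using Subgroup.closure_induction with
  | mem x hx =>
    refine ⟨[x], ?_, by simp⟩
    rcases hx with h | h <;> simp_all
  | one => exact ⟨[], by simp, by simp⟩
  | mul x y hx hy ihx ihy =>
    obtain ⟨w1, h1, e1⟩ := ihx
    obtain ⟨w2, h2, e2⟩ := ihy
    refine ⟨w1 ++ w2, ?_, by simp [e1, e2]⟩
    intro z hz
    rcases List.mem_append.mp hz with h | h
    exacts [h1 z h, h2 z h]
  | inv x hx ihx =>
    obtain ⟨w, h1, e1⟩ := ihx
    refine ⟨(w.map (fun z => z⁻¹)).reverse, ?_, by rw [← List.prod_inv_reverse, e1]⟩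
    intro z hz
    rw [List.mem_reverse, List.mem_map] at hz
    obtain ⟨z', hz', rfl⟩ := hz
    rcases h1 z' hz' with h | h
    · exact Or.inl (O.inv_mem h)
    · exact Or.inr (L.inv_mem h)

/-- base vertex -/
def v₀ : AmalV O L := Sum.inl (QuotientGroup.mk 1)

lemma reach_base (hsup : O ⊔ L = ⊤) (g : G) :
    (graph O L).Reachable v₀ (.inl (QuotientGroup.mk g)) ∧
      (graph O L).Reachable v₀ (.inr (QuotientGroup.mk g)) := by
  obtain ⟨w, hw, rfl⟩ := exists_word hsup g
  clear hsup
  induction w using List.reverseRecOn with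
  | nil =>
    constructor
    · rfl
    · exact (adj_of_rep (rfl) (rfl)).reachable
  | append_singleton w a ih =>
    have hw' : ∀ x ∈ w, x ∈ O ∨ x ∈ L := fun x hx => hw x (by simp [hx])
    obtain ⟨ih1, ih2⟩ := ih hw'
    have ha := hw a (by simp)
    rw [List.prod_append, List.prod_cons, List.prod_nil, mul_one]
    rcases ha with ha | ha
    · have he : (QuotientGroup.mk (w.prod * a) : G ⧸ O) = QuotientGroup.mk w.prod :=
        (QuotientGroup.eq).mpr (by simpa using O.inv_mem ha)
      constructor
      · rw [he]; exact ih1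
      · refine Reachable.trans ?_ (adj_of_rep (rfl) (rfl)).reachable
        rw [he]; exact ih1
    · have he : (QuotientGroup.mk (w.prod * a) : G ⧸ L) = QuotientGroup.mk w.prod :=
        (QuotientGroup.eq).mpr (by simpa using L.inv_mem ha)
      constructor
      · refine Reachable.trans ?_ ((graph O L).adj_symm (adj_of_rep (rfl) (rfl))).reachable
        rw [he]; exact ih2
      · rw [he]; exact ih2

lemma preconn (hsup : O ⊔ L = ⊤) : (graph O L).Preconnected := by
  have hbase : ∀ v : AmalV O L, (graph O L).Reachable v₀ v := by
    rintro (a | b)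
    · obtain ⟨g, rfl⟩ := Quotient.exists_rep a
      exact (reach_base hsup g).1
    · obtain ⟨g, rfl⟩ := Quotient.exists_rep b
      exact (reach_base hsup g).2
  intro u v
  exact (hbase u).symm.trans (hbase v)

lemma path_unique (hfree : ∀ w : List G, IsAlternatingWord O L w → w ≠ [] → w.prod ≠ 1)
    {u v : AmalV O L} {p q : (graph O L).Walk u v} (hp : p.IsPath) (hq : q.IsPath) :
    p = q := by
  have h := (isAcyclic_iff_path_unique.mp (tree_acyclic hfree)) (v := u) (w := v) ⟨p, hp⟩ ⟨q, hq⟩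
  exact congrArg Subtype.val h

end Words



section Geometry

variable (hfree : ∀ w : List G, IsAlternatingWord O L w → w ≠ [] → w.prod ≠ 1)
variable (hsup : O ⊔ L = ⊤)

set_option linter.unusedVariables false in
/-- the geodesic between two vertices -/
noncomputable def geo (hfree : ∀ w : List G, IsAlternatingWord O L w → w ≠ [] → w.prod ≠ 1)
    (hsup : O ⊔ L = ⊤) (u v : AmalV O L) : (graph O L).Walk u v :=
  letI := Classical.decEq (AmalV O L)
  (Classical.choice (preconn hsup u v)).bypass

include hfree hsup

lemma geo_isPath (u v : AmalV O L) : (geo hfree hsup u v).IsPath := by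
  letI := Classical.decEq (AmalV O L)
  unfold geo
  exact Walk.bypass_isPath _

lemma path_eq_geo {u v : AmalV O L} (p : (graph O L).Walk u v) (hp : p.IsPath) :
    p = geo hfree hsup u v := path_unique hfree hp (geo_isPath hfree hsup u v)

omit hfree hsup

/-- distance -/
noncomputable def dd (hfree : ∀ w : List G, IsAlternatingWord O L w → w ≠ [] → w.prod ≠ 1)
    (hsup : O ⊔ L = ⊤) (u v : AmalV O L) : ℕ := (geo hfree hsup u v).length

include hfree hsup

lemma dd_eq_zero {u v : AmalV O L} (h : dd hfree hsup u v = 0) : u = v :=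
  Walk.eq_of_length_eq_zero h

lemma geo_self (u : AmalV O L) : geo hfree hsup u u = Walk.nil :=
  (path_eq_geo hfree hsup Walk.nil (by simp)).symm

lemma dd_self (u : AmalV O L) : dd hfree hsup u u = 0 := by
  rw [dd, geo_self hfree hsup]; rfl

lemma geo_reverse (u v : AmalV O L) : (geo hfree hsup u v).reverse = geo hfree hsup v u :=
  path_eq_geo hfree hsup _ ((Walk.isPath_reverse_iff _).mpr (geo_isPath hfree hsup u v))

lemma dd_symm (u v : AmalV O L) : dd hfree hsup v u = dd hfree hsup u v := by
  rw [dd, ← geo_reverse hfree hsup, Walk.length_reverse]; rfl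

lemma act_geo (g : G) (u v : AmalV O L) :
    ((geo hfree hsup u v).map (actHom g)) = geo hfree hsup (act g u) (act g v) :=
  path_eq_geo hfree hsup _
    (Walk.map_isPath_of_injective (act_injective g) (geo_isPath hfree hsup u v))

lemma dd_act (g : G) (u v : AmalV O L) :
    dd hfree hsup (act g u) (act g v) = dd hfree hsup u v := by
  rw [dd, ← act_geo hfree hsup]; exact Walk.length_map _ _

lemma act_geo_getVert (g : G) (u v : AmalV O L) (i : ℕ) :
    (geo hfree hsup (act g u) (act g v)).getVert i = act g ((geo hfree hsup u v).getVert i) := by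
  rw [← act_geo hfree hsup]; exact getVert_map _ _ _

/-- convexity of fixed-point sets -/
lemma fix_getVert {g : G} {u v : AmalV O L} (hu : act g u = u) (hv : act g v = v) (i : ℕ) :
    act g ((geo hfree hsup u v).getVert i) = (geo hfree hsup u v).getVert i := by
  have h := act_geo_getVert hfree hsup g u v i
  rw [hu, hv] at h
  exact h.symm

omit hfree hsup

lemma getVert_append_left {u m w : AmalV O L} {r : (graph O L).Walk u m}
    {s : (graph O L).Walk m w} {i : ℕ} (hi : i ≤ r.length) :
    (r.append s).getVert i = r.getVert i := by
  rcases lt_or_eq_of_le hi with hlt | rfl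
  · rw [Walk.getVert_append, if_pos hlt]
  · rw [Walk.getVert_append, if_neg (lt_irrefl _), Nat.sub_self, Walk.getVert_zero,
      Walk.getVert_length]

lemma isPath_append_parts {u m w : AmalV O L} {r : (graph O L).Walk u m}
    {s : (graph O L).Walk m w} (h : (r.append s).IsPath) : r.IsPath ∧ s.IsPath := by
  rw [Walk.isPath_def] at h
  rw [Walk.support_append] at h
  constructor
  · rw [Walk.isPath_def]
    exact h.of_append_left
  · rw [Walk.isPath_def, Walk.support_eq_cons]
    refine List.Nodup.cons ?_ h.of_append_right
    intro hm
    exact (List.disjoint_of_nodup_append h) (r.end_mem_support) hm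

lemma getVert_one_append {u x w : AmalV O L} (s : (graph O L).Walk u x)
    (t : (graph O L).Walk x w) (hs : 1 ≤ s.length) :
    (s.append t).getVert 1 = s.getVert 1 := getVert_append_left hs

include hfree

/-- paths from a common vertex with different first steps only meet at the start -/
lemma meet_start {v a b u w : AmalV O L} (h1 : (graph O L).Adj v a) (p1 : (graph O L).Walk a u)
    (h2 : (graph O L).Adj v b) (q1 : (graph O L).Walk b w)
    (hp : (Walk.cons h1 p1).IsPath) (hq : (Walk.cons h2 q1).IsPath) (hab : a ≠ b) :
    ∀ x, x ∈ (Walk.cons h1 p1).support → x ∈ (Walk.cons h2 q1).support → x = v := by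
  classical
  intro x hxp hxq
  by_contra hxv
  have hr1p : ((Walk.cons h1 p1).takeUntil x hxp).IsPath := hp.takeUntil hxp
  have hr2p : ((Walk.cons h2 q1).takeUntil x hxq).IsPath := hq.takeUntil hxq
  have heq : (Walk.cons h1 p1).takeUntil x hxp = (Walk.cons h2 q1).takeUntil x hxq :=
    path_unique hfree hr1p hr2p
  have hlen1 : 1 ≤ ((Walk.cons h1 p1).takeUntil x hxp).length := by
    rcases Nat.eq_zero_or_pos ((Walk.cons h1 p1).takeUntil x hxp).length with h0 | h1'
    · exact absurd (Walk.eq_of_length_eq_zero h0).symm hxv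
    · exact h1'
  have hlen2 : 1 ≤ ((Walk.cons h2 q1).takeUntil x hxq).length := heq ▸ hlen1
  have e1 : ((Walk.cons h1 p1).takeUntil x hxp).getVert 1 = a := by
    have h := getVert_one_append _ ((Walk.cons h1 p1).dropUntil x hxp) hlen1
    rw [Walk.take_spec (Walk.cons h1 p1) hxp] at h
    rw [← h, Walk.getVert_cons_succ, Walk.getVert_zero]
  have e2 : ((Walk.cons h2 q1).takeUntil x hxq).getVert 1 = b := by
    have h := getVert_one_append _ ((Walk.cons h2 q1).dropUntil x hxq) hlen2
    rw [Walk.take_spec (Walk.cons h2 q1) hxq] at h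
    rw [← h, Walk.getVert_cons_succ, Walk.getVert_zero]
  exact hab (by rw [← e1, heq, e2])

/-- The median/tripod lemma. -/
lemma median {v u w : AmalV O L} (p : (graph O L).Walk v u) (q : (graph O L).Walk v w)
    (hp : p.IsPath) (hq : q.IsPath) :
    ∃ (m : AmalV O L) (r : (graph O L).Walk v m) (p' : (graph O L).Walk m u)
      (q' : (graph O L).Walk m w),
      p = r.append p' ∧ q = r.append q' ∧ (p'.reverse.append q').IsPath := by
  induction p with
  | nil =>
    exact ⟨_, Walk.nil, Walk.nil, q, rfl, (Walk.nil_append q).symm, by simpa using hq⟩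
  | @cons v a u h1 p1 ih =>
    cases q with
    | nil =>
      refine ⟨_, Walk.nil, Walk.cons h1 p1, Walk.nil, (Walk.nil_append _).symm, rfl, ?_⟩
      rw [Walk.append_nil, Walk.isPath_reverse_iff]
      exact hp
    | @cons _ b _ h2 q1 =>
      by_cases hab : a = b
      · subst hab
        obtain ⟨m, r, p', q', e1, e2, hcat⟩ := ih q1 hp.of_cons hq.of_cons
        exact ⟨m, Walk.cons h1 r, p', q', by rw [Walk.cons_append, ← e1],
          by rw [Walk.cons_append, ← e2], hcat⟩
      · refine ⟨v, Walk.nil, Walk.cons h1 p1, Walk.cons h2 q1,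
          (Walk.nil_append _).symm, (Walk.nil_append _).symm, ?_⟩
        rw [Walk.isPath_def, Walk.support_append]
        refine List.Nodup.append ?_ ?_ ?_
        · rw [Walk.support_reverse, List.nodup_reverse]
          exact hp.support_nodup
        · exact (hq.support_nodup).tail
        · intro x hx1 hx2
          rw [Walk.support_reverse, List.mem_reverse] at hx1
          have hx2' : x ∈ (Walk.cons h2 q1).support := List.mem_of_mem_tail hx2
          have hxv := meet_start hfree h1 p1 h2 q1 hp hq hab x hx1 hx2'
          subst hxv
          have hnd := hq.support_nodup
          rw [Walk.support_eq_cons (Walk.cons h2 q1)] at hnd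
          exact (List.nodup_cons.mp hnd).1 hx2

end Geometry




section Geometry2

variable (hfree : ∀ w : List G, IsAlternatingWord O L w → w ≠ [] → w.prod ≠ 1)
variable (hsup : O ⊔ L = ⊤)

lemma walk_even {u v : AmalV O L} (p : (graph O L).Walk u v) :
    Even p.length ↔ typ u = typ v := by
  induction p with
  | nil => simp
  | @cons u a v h p ih =>
    rw [Walk.length_cons, Nat.even_add_one, ih, adj_typ h]
    cases typ u <;> cases typ v <;> simp

include hfree hsup

lemma swap_fix {g : G} {z z' : AmalV O L} (hz : act g z = z') (hz' : act g z' = z) :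
    ∃ m : AmalV O L, act g m = m := by
  by_cases hzz : z = z'
  · exact ⟨z, hz.trans hzz.symm⟩
  · have hev : Even (geo hfree hsup z z').length :=
      (walk_even _).mpr (by rw [← hz, typ_act])
    obtain ⟨k, hk⟩ := hev
    have hmap : ((geo hfree hsup z z').map (actHom g)).copy hz hz' = geo hfree hsup z' z :=
      path_eq_geo hfree hsup _ ((Walk.isPath_copy _ _ _).mpr
        (Walk.map_isPath_of_injective (act_injective g) (geo_isPath hfree hsup z z')))
    refine ⟨(geo hfree hsup z z').getVert k, ?_⟩
    have h1 : act g ((geo hfree hsup z z').getVert k)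
        = (((geo hfree hsup z z').map (actHom g)).copy hz hz').getVert k := by
      exact ((Walk.getVert_copy _ k hz hz').trans (getVert_map (actHom g) (geo hfree hsup z z') k)).symm
    rw [h1, hmap, ← geo_reverse hfree hsup, Walk.getVert_reverse]
    congr 1
    omega

lemma nonfix_grow {g : G} (hg : ∀ m : AmalV O L, act g m ≠ m) (u : AmalV O L) :
    dd hfree hsup u (act g u) + 2 ≤ dd hfree hsup u (act (g * g) u) := by
  have hk0 : dd hfree hsup u (act g u) ≠ 0 := by
    intro h
    exact hg u (dd_eq_zero hfree hsup h).symm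
  have hkeven : Even (dd hfree hsup u (act g u)) := (walk_even _).mpr (by rw [typ_act])
  have hppath : (geo hfree hsup u (act g u)).reverse.IsPath :=
    (Walk.isPath_reverse_iff _).mpr (geo_isPath hfree hsup _ _)
  have hqpath : (((geo hfree hsup u (act g u)).map (actHom g)).copy rfl
      (act_mul g g u).symm).IsPath :=
    (Walk.isPath_copy _ _ _).mpr
      (Walk.map_isPath_of_injective (act_injective g) (geo_isPath hfree hsup _ _))
  obtain ⟨m, r, p', q', e1, e2, hcat⟩ := median hfree _ _ hppath hqpath
  have hjp : r.length + p'.length = dd hfree hsup u (act g u) := by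
    have := congrArg Walk.length e1
    rw [Walk.length_reverse, Walk.length_append] at this
    exact this.symm
  have hjq : r.length + q'.length = dd hfree hsup u (act g u) := by
    have := congrArg Walk.length e2
    exact (Walk.length_append _ _).symm.trans (this.symm.trans ((Walk.length_copy ..).trans (Walk.length_map ..)))
  set pth := geo hfree hsup u (act g u) with hpth
  set k := dd hfree hsup u (act g u) with hkdef
  have hgv : ∀ i ≤ r.length, pth.getVert (k - i) = act g (pth.getVert i) := by
    intro i hi
    have h1 : pth.reverse.getVert i = pth.getVert (k - i) := Walk.getVert_reverse pth i
    have h2 : ((pth.map (actHom g)).copy rfl (act_mul g g u).symm).getVert i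
        = act g (pth.getVert i) := by exact (Walk.getVert_copy ..).trans (getVert_map ..)
    have h3 : pth.reverse.getVert i = r.getVert i := by
      rw [e1]; exact getVert_append_left hi
    have h4 : ((pth.map (actHom g)).copy rfl (act_mul g g u).symm).getVert i
        = r.getVert i := by rw [e2]; exact getVert_append_left hi
    rw [← h1, h3, ← h4, h2]
  have h2j : 2 * r.length < k := by
    by_contra hge
    push_neg at hge
    have i1 := hgv r.length le_rfl
    have i2 := hgv (k - r.length) (by omega)
    have hkj : k - (k - r.length) = r.length := by omega
    rw [hkj] at i2
    obtain ⟨m', hm'⟩ := swap_fix hfree hsup i1.symm i2.symm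
    exact hg m' hm'
  have hcat' : p'.reverse.append q' = geo hfree hsup u (act (g * g) u) :=
    path_eq_geo hfree hsup _ hcat
  have hdg : dd hfree hsup u (act (g * g) u) = p'.length + q'.length := by
    rw [dd, ← hcat', Walk.length_append, Walk.length_reverse]
  obtain ⟨c, hc⟩ := hkeven
  omega

lemma exists_min (S : Set (AmalV O L)) (hS : S.Nonempty) (u : AmalV O L) :
    ∃ p ∈ S, ∀ x ∈ S, dd hfree hsup u p ≤ dd hfree hsup u x := by
  obtain ⟨v, hv⟩ := hS
  have hI : ((fun x => dd hfree hsup u x) '' S).Nonempty := ⟨_, ⟨v, hv, rfl⟩⟩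
  obtain ⟨p, hp, hpe⟩ := Nat.sInf_mem hI
  refine ⟨p, hp, fun x hx => ?_⟩
  have h : sInf ((fun x => dd hfree hsup u x) '' S) ≤ dd hfree hsup u x :=
    Nat.sInf_le (Set.mem_image_of_mem _ hx)
  have hpe' : dd hfree hsup u p = sInf ((fun x => dd hfree hsup u x) '' S) := hpe
  omega

lemma gate {S : Set (AmalV O L)}
    (hconv : ∀ x ∈ S, ∀ y ∈ S, ∀ i, (geo hfree hsup x y).getVert i ∈ S)
    {u p : AmalV O L} (hpS : p ∈ S)
    (hmin : ∀ x ∈ S, dd hfree hsup u p ≤ dd hfree hsup u x)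
    {x : AmalV O L} (hx : x ∈ S) :
    dd hfree hsup u x = dd hfree hsup u p + dd hfree hsup p x ∧
      ∀ i ≤ dd hfree hsup u p,
        (geo hfree hsup u x).getVert i = (geo hfree hsup u p).getVert i := by
  obtain ⟨m, r, p', q', e1, e2, hcat⟩ :=
    median hfree (geo hfree hsup u p) (geo hfree hsup u x)
      (geo_isPath hfree hsup _ _) (geo_isPath hfree hsup _ _)
  have hcat' : p'.reverse.append q' = geo hfree hsup p x := path_eq_geo hfree hsup _ hcat
  have hrlen : r.length + p'.length = dd hfree hsup u p := by
    have := congrArg Walk.length e1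
    rw [Walk.length_append] at this
    exact this.symm
  have hxlen : r.length + q'.length = dd hfree hsup u x := by
    have := congrArg Walk.length e2
    rw [Walk.length_append] at this
    exact this.symm
  have hm : m ∈ S := by
    have hmv : m = (geo hfree hsup p x).getVert p'.length := by
      rw [← hcat', getVert_append_left (by rw [Walk.length_reverse]),
        Walk.getVert_reverse, Nat.sub_self, Walk.getVert_zero]
    rw [hmv]
    exact hconv p hpS x hx _
  have hr_path : r.IsPath := (isPath_append_parts (e1 ▸ geo_isPath hfree hsup u p)).1
  have hdm : dd hfree hsup u m = r.length := by
    rw [dd, ← path_eq_geo hfree hsup r hr_path]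
  have hple : dd hfree hsup u p ≤ dd hfree hsup u m := hmin m hm
  have hp0 : p'.length = 0 := by omega
  have hdpx : dd hfree hsup p x = p'.length + q'.length := by
    rw [dd, ← hcat', Walk.length_append, Walk.length_reverse]
  refine ⟨by omega, ?_⟩
  intro i hi
  have h2 : (geo hfree hsup u x).getVert i = r.getVert i := by
    rw [e2]; exact getVert_append_left (by omega)
  have h3 : (geo hfree hsup u p).getVert i = r.getVert i := by
    rw [e1]; exact getVert_append_left (by omega)
  rw [h2, h3]

lemma min_unique {S : Set (AmalV O L)}
    (hconv : ∀ x ∈ S, ∀ y ∈ S, ∀ i, (geo hfree hsup x y).getVert i ∈ S)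
    {u p p₂ : AmalV O L} (hpS : p ∈ S)
    (hmin : ∀ x ∈ S, dd hfree hsup u p ≤ dd hfree hsup u x)
    (hp₂S : p₂ ∈ S) (hmin₂ : ∀ x ∈ S, dd hfree hsup u p₂ ≤ dd hfree hsup u x) :
    p = p₂ := by
  have h := (gate hfree hsup hconv hpS hmin hp₂S).1
  have h2 := hmin₂ p hpS
  exact dd_eq_zero hfree hsup (by omega)

end Geometry2




section Phi

lemma phi_zero (φ : ℝ → G) (hhom : ∀ s t : ℝ, φ (s + t) = φ s * φ t) : φ 0 = 1 := by
  have h := hhom 0 0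
  rw [add_zero] at h
  have h2 : φ 0 * 1 = φ 0 * φ 0 := by rw [mul_one]; exact h
  exact (mul_left_cancel h2).symm

lemma phi_neg (φ : ℝ → G) (hhom : ∀ s t : ℝ, φ (s + t) = φ s * φ t) (s : ℝ) :
    φ (-s) = (φ s)⁻¹ := by
  refine eq_inv_of_mul_eq_one_left ?_
  rw [← hhom, neg_add_cancel, phi_zero φ hhom]

lemma phi_nat (φ : ℝ → G) (hhom : ∀ s t : ℝ, φ (s + t) = φ s * φ t) (n : ℕ) (s : ℝ) :
    φ (n * s) = φ s ^ n := by
  induction n with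
  | zero => simpa using phi_zero φ hhom
  | succ n ih =>
    have he : ((n + 1 : ℕ) : ℝ) * s = (n : ℝ) * s + s := by push_cast; ring
    rw [he, hhom, ih, pow_succ]

lemma phi_int (φ : ℝ → G) (hhom : ∀ s t : ℝ, φ (s + t) = φ s * φ t) (z : ℤ) (s : ℝ) :
    φ (z * s) = φ s ^ z := by
  cases z with
  | ofNat n =>
    have h0 : ((Int.ofNat n : ℤ) : ℝ) = (n : ℝ) := by simp
    rw [h0, phi_nat φ hhom]
    simp [zpow_natCast]
  | negSucc n =>
    have h1 : ((Int.negSucc n : ℤ) : ℝ) * s = -(((n + 1 : ℕ) : ℝ) * s) := by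
      push_cast; ring
    rw [h1, phi_neg φ hhom, phi_nat φ hhom, zpow_negSucc]

end Phi

section Fix

lemma act_fix_inv {g : G} {v : AmalV O L} (hg : act g v = v) : act g⁻¹ v = v := by
  conv_lhs => rw [← hg]
  rw [← act_mul, inv_mul_cancel, act_one]

lemma act_fix_pow {g : G} {v : AmalV O L} (hg : act g v = v) (n : ℕ) : act (g ^ n) v = v := by
  induction n with
  | zero => simp
  | succ n ih => rw [pow_succ, act_mul, hg, ih]

lemma act_fix_zpow {g : G} {v : AmalV O L} (hg : act g v = v) (z : ℤ) : act (g ^ z) v = v := by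
  cases z with
  | ofNat n => rw [Int.ofNat_eq_coe, zpow_natCast]; exact act_fix_pow hg n
  | negSucc n => rw [zpow_negSucc]; exact act_fix_inv (act_fix_pow hg (n + 1))

lemma act_inl_eq_iff {g a0 : G} :
    act (O := O) (L := L) g (Sum.inl (QuotientGroup.mk a0)) = Sum.inl (QuotientGroup.mk a0)
      ↔ a0⁻¹ * g⁻¹ * a0 ∈ O := by
  constructor
  · intro h
    have h' : (Sum.inl (QuotientGroup.mk (g * a0) : G ⧸ O) : AmalV O L)
        = Sum.inl (QuotientGroup.mk a0) := h
    have h1 : (QuotientGroup.mk (g * a0) : G ⧸ O) = QuotientGroup.mk a0 := Sum.inl.inj h'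
    have h2 := QuotientGroup.eq.mp h1
    have he : (g * a0)⁻¹ * a0 = a0⁻¹ * g⁻¹ * a0 := by group
    rwa [he] at h2
  · intro h
    have he : (g * a0)⁻¹ * a0 = a0⁻¹ * g⁻¹ * a0 := by group
    have h2 : (QuotientGroup.mk (g * a0) : G ⧸ O) = QuotientGroup.mk a0 :=
      QuotientGroup.eq.mpr (by rw [he]; exact h)
    exact congrArg Sum.inl h2

lemma act_inr_eq_iff {g b0 : G} :
    act (O := O) (L := L) g (Sum.inr (QuotientGroup.mk b0)) = Sum.inr (QuotientGroup.mk b0)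
      ↔ b0⁻¹ * g⁻¹ * b0 ∈ L := by
  constructor
  · intro h
    have h' : (Sum.inr (QuotientGroup.mk (g * b0) : G ⧸ L) : AmalV O L)
        = Sum.inr (QuotientGroup.mk b0) := h
    have h1 : (QuotientGroup.mk (g * b0) : G ⧸ L) = QuotientGroup.mk b0 := Sum.inr.inj h'
    have h2 := QuotientGroup.eq.mp h1
    have he : (g * b0)⁻¹ * b0 = b0⁻¹ * g⁻¹ * b0 := by group
    rwa [he] at h2
  · intro h
    have he : (g * b0)⁻¹ * b0 = b0⁻¹ * g⁻¹ * b0 := by group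
    have h2 : (QuotientGroup.mk (g * b0) : G ⧸ L) = QuotientGroup.mk b0 :=
      QuotientGroup.eq.mpr (by rw [he]; exact h)
    exact congrArg Sum.inr h2

lemma conclude (φ : ℝ → G) (p : AmalV O L) (hp : ∀ t : ℝ, act (φ t) p = p) :
    (∃ c : G, ∀ t : ℝ, c * φ t * c⁻¹ ∈ O) ∨ (∃ c : G, ∀ t : ℝ, c * φ t * c⁻¹ ∈ L) := by
  rcases p with a | b
  · revert hp
    refine QuotientGroup.induction_on a ?_
    intro a0 hp
    left
    refine ⟨a0⁻¹, fun t => ?_⟩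
    have h := act_inl_eq_iff.mp (hp t)
    have h2 := O.inv_mem h
    have he : (a0⁻¹ * (φ t)⁻¹ * a0)⁻¹ = a0⁻¹ * φ t * (a0⁻¹)⁻¹ := by group
    rwa [he] at h2
  · revert hp
    refine QuotientGroup.induction_on b ?_
    intro b0 hp
    right
    refine ⟨b0⁻¹, fun t => ?_⟩
    have h := act_inr_eq_iff.mp (hp t)
    have h2 := L.inv_mem h
    have he : (b0⁻¹ * (φ t)⁻¹ * b0)⁻¹ = b0⁻¹ * φ t * (b0⁻¹)⁻¹ := by group
    rwa [he] at h2

end Fix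

lemma dyadic_dense : Dense {x : ℝ | ∃ (z : ℤ) (n : ℕ), x = z / 2 ^ n} := by
  rw [Metric.dense_iff]
  intro x r hr
  obtain ⟨n, hn⟩ : ∃ n : ℕ, (1 : ℝ) / 2 ^ n < r := by
    obtain ⟨n, hn⟩ := exists_pow_lt_of_lt_one hr (by norm_num : (1 : ℝ) / 2 < 1)
    refine ⟨n, ?_⟩
    rw [div_pow, one_pow] at hn
    exact hn
  refine ⟨(⌊x * 2 ^ n⌋ : ℝ) / 2 ^ n, ?_, ⟨⌊x * 2 ^ n⌋, n, rfl⟩⟩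
  rw [Metric.mem_ball, Real.dist_eq]
  have h1 : (⌊x * 2 ^ n⌋ : ℝ) ≤ x * 2 ^ n := Int.floor_le _
  have h2 : x * 2 ^ n < ⌊x * 2 ^ n⌋ + 1 := Int.lt_floor_add_one _
  have hpow : (0 : ℝ) < 2 ^ n := by positivity
  have hge : (0 : ℝ) ≤ x - (⌊x * 2 ^ n⌋ : ℝ) / 2 ^ n := by
    rw [sub_nonneg, div_le_iff₀ hpow]
    exact h1
  have hlt : x - (⌊x * 2 ^ n⌋ : ℝ) / 2 ^ n < 1 / 2 ^ n := by
    rw [sub_lt_iff_lt_add, ← add_div, lt_div_iff₀ hpow]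
    linarith
  rw [abs_sub_comm, abs_of_nonneg hge]
  linarith

section StepA

variable (hfree : ∀ w : List G, IsAlternatingWord O L w → w ≠ [] → w.prod ≠ 1)
variable (hsup : O ⊔ L = ⊤)

include hfree hsup

lemma stepA (φ : ℝ → G) (hhom : ∀ s t : ℝ, φ (s + t) = φ s * φ t) (t : ℝ) :
    ∃ v : AmalV O L, act (φ t) v = v := by
  by_contra hn
  push_neg at hn
  have hup : ∀ n : ℕ, ∀ v : AmalV O L, act (φ (t / 2 ^ n)) v ≠ v := by
    intro n
    induction n with
    | zero => simpa using hn
    | succ n ih =>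
      intro v hv
      refine ih v ?_
      have he : t / 2 ^ n = t / 2 ^ (n + 1) + t / 2 ^ (n + 1) := by ring
      rw [he, hhom, act_mul, hv, hv]
  have hstep : ∀ n : ℕ, dd hfree hsup v₀ (act (φ (t / 2 ^ (n + 1))) v₀) + 2
      ≤ dd hfree hsup v₀ (act (φ (t / 2 ^ n)) v₀) := by
    intro n
    have he : φ (t / 2 ^ n) = φ (t / 2 ^ (n + 1)) * φ (t / 2 ^ (n + 1)) := by
      rw [← hhom]; congr 1; ring
    have h := nonfix_grow hfree hsup (hup (n + 1)) v₀
    rw [← he] at h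
    exact h
  have hlin : ∀ n : ℕ, dd hfree hsup v₀ (act (φ (t / 2 ^ n)) v₀) + 2 * n
      ≤ dd hfree hsup v₀ (act (φ (t / 2 ^ 0)) v₀) := by
    intro n
    induction n with
    | zero => omega
    | succ n ih =>
      have := hstep n
      omega
  have := hlin (dd hfree hsup v₀ (act (φ (t / 2 ^ 0)) v₀) + 1)
  omega

end StepA



theorem main {𝒢 : Type*} [Group 𝒢] [TopologicalSpace 𝒢] [IsTopologicalGroup 𝒢]
    (O L : Subgroup 𝒢) (hO : IsClosed (O : Set 𝒢)) (hL : IsClosed (L : Set 𝒢))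
    (hG : IsAmalgamatedProduct O L)
    (φ : ℝ → 𝒢) (hhom : ∀ s t : ℝ, φ (s + t) = φ s * φ t) (hcont : Continuous φ) :
    (∃ c : 𝒢, ∀ t : ℝ, c * φ t * c⁻¹ ∈ O) ∨ (∃ c : 𝒢, ∀ t : ℝ, c * φ t * c⁻¹ ∈ L) := by
  obtain ⟨hsup, hfree⟩ := hG
  classical
  have hclosed : ∀ v : AmalV O L, IsClosed {t : ℝ | act (φ t) v = v} := by
    rintro (a | b)
    · refine QuotientGroup.induction_on a ?_
      intro a0
      have hset : {t : ℝ | act (φ t) (Sum.inl (QuotientGroup.mk a0) : AmalV O L)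
            = (Sum.inl (QuotientGroup.mk a0) : AmalV O L)}
          = (fun t : ℝ => a0⁻¹ * (φ t)⁻¹ * a0) ⁻¹' (O : Set 𝒢) := by
        ext t
        simp only [Set.mem_setOf_eq, Set.mem_preimage, SetLike.mem_coe]
        exact act_inl_eq_iff
      rw [hset]
      exact hO.preimage ((continuous_const.mul hcont.inv).mul continuous_const)
    · refine QuotientGroup.induction_on b ?_
      intro b0
      have hset : {t : ℝ | act (φ t) (Sum.inr (QuotientGroup.mk b0) : AmalV O L)
            = (Sum.inr (QuotientGroup.mk b0) : AmalV O L)}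
          = (fun t : ℝ => b0⁻¹ * (φ t)⁻¹ * b0) ⁻¹' (L : Set 𝒢) := by
        ext t
        simp only [Set.mem_setOf_eq, Set.mem_preimage, SetLike.mem_coe]
        exact act_inr_eq_iff
      rw [hset]
      exact hL.preimage ((continuous_const.mul hcont.inv).mul continuous_const)
  set S : ℕ → Set (AmalV O L) := fun n => {v | act (φ (1 / 2 ^ n)) v = v} with hSdef
  have hSne : ∀ n, (S n).Nonempty := fun n => stepA hfree hsup φ hhom _
  have hSdec : ∀ n, S (n + 1) ⊆ S n := by
    intro n v hv
    have hv' : act (φ ((1 : ℝ) / 2 ^ (n + 1))) v = v := hv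
    show act (φ ((1 : ℝ) / 2 ^ n)) v = v
    have he : (1 : ℝ) / 2 ^ n = 1 / 2 ^ (n + 1) + 1 / 2 ^ (n + 1) := by ring
    rw [he, hhom, act_mul, hv', hv']
  have hSmono : ∀ m n, m ≤ n → S n ⊆ S m := by
    intro m n h
    induction h with
    | refl => exact fun _ h => h
    | step h ih => exact fun v hv => ih (hSdec _ hv)
  have hSconv : ∀ n, ∀ x ∈ S n, ∀ y ∈ S n, ∀ i, (geo hfree hsup x y).getVert i ∈ S n :=
    fun n x hx y hy i => fix_getVert hfree hsup hx hy i
  have hminex : ∀ n, ∃ p ∈ S n, ∀ x ∈ S n, dd hfree hsup v₀ p ≤ dd hfree hsup v₀ x :=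
    fun n => exists_min hfree hsup _ (hSne n) v₀
  choose p hpS hpmin using hminex
  have hamono : ∀ n, dd hfree hsup v₀ (p n) ≤ dd hfree hsup v₀ (p (n + 1)) :=
    fun n => hpmin n (p (n + 1)) (hSdec n (hpS (n + 1)))
  by_cases hbdd : ∃ B, ∀ n, dd hfree hsup v₀ (p n) ≤ B
  · -- bounded case
    obtain ⟨B, hB⟩ := hbdd
    obtain ⟨N, hN⟩ : ∃ N, ∀ n, dd hfree hsup v₀ (p n) ≤ dd hfree hsup v₀ (p N) := by
      set f : ℕ → ℕ := fun n => dd hfree hsup v₀ (p n) with hf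
      have hbdd' : BddAbove (Set.range f) := ⟨B, by rintro _ ⟨n, rfl⟩; exact hB n⟩
      have hne : (Set.range f).Nonempty := ⟨f 0, 0, rfl⟩
      obtain ⟨N, hNe⟩ := Nat.sSup_mem hne hbdd'
      refine ⟨N, fun n => ?_⟩
      have h1 : f n ≤ sSup (Set.range f) := le_csSup hbdd' ⟨n, rfl⟩
      rw [← hNe] at h1
      exact h1
    have hconst : ∀ n, N ≤ n → p n = p N := by
      intro n hn
      induction n, hn using Nat.le_induction with
      | base => rfl
      | succ n hn ih =>
        have h1 : dd hfree hsup v₀ (p n) = dd hfree hsup v₀ (p N) := by rw [ih]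
        have h2 := hN (n + 1)
        have h3 := hamono n
        have hg := (gate hfree hsup (hSconv n) (hpS n) (hpmin n) (hSdec n (hpS (n + 1)))).1
        have h0 : dd hfree hsup (p n) (p (n + 1)) = 0 := by omega
        have h4 := dd_eq_zero hfree hsup h0
        rw [← h4, ih]
    have hfixall : ∀ n, p N ∈ S n := by
      intro n
      by_cases hn : N ≤ n
      · exact (hconst n hn) ▸ hpS n
      · exact hSmono n N (by omega) (hpS N)
    have hdy : ∀ (z : ℤ) (n : ℕ), act (φ ((z : ℝ) / 2 ^ n)) (p N) = p N := by
      intro z n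
      have h1 : (z : ℝ) / 2 ^ n = (z : ℝ) * (1 / 2 ^ n) := by ring
      rw [h1, phi_int φ hhom]
      exact act_fix_zpow (hfixall n) z
    have hall : ∀ t : ℝ, act (φ t) (p N) = p N := by
      have hTuniv : {t : ℝ | act (φ t) (p N) = p N} = Set.univ := by
        apply Set.eq_univ_of_univ_subset
        rw [← dyadic_dense.closure_eq]
        refine (hclosed (p N)).closure_subset_iff.mpr ?_
        rintro x ⟨z, n, rfl⟩
        exact hdy z n
      intro t
      have ht : t ∈ {t : ℝ | act (φ t) (p N) = p N} := hTuniv ▸ Set.mem_univ t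
      exact ht
    exact conclude φ (p N) hall
  · -- unbounded case
    push_neg at hbdd
    have hup : ∀ j : ℕ, ∃ n, j ≤ dd hfree hsup v₀ (p n) := fun j => (hbdd j).imp fun n h => h.le
    choose Nj hNj using hup
    set w : ℕ → AmalV O L := fun j => (geo hfree hsup v₀ (p (Nj j))).getVert j with hw
    have hcoh : ∀ n j, j ≤ dd hfree hsup v₀ (p n) →
        (geo hfree hsup v₀ (p n)).getVert j = w j := by
      have key : ∀ m n j, n ≤ m → j ≤ dd hfree hsup v₀ (p n) →
          (geo hfree hsup v₀ (p m)).getVert j = (geo hfree hsup v₀ (p n)).getVert j := by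
        intro m n j hnm hj
        exact (gate hfree hsup (hSconv n) (hpS n) (hpmin n) (hSmono n m hnm (hpS m))).2 j hj
      intro n j hj
      have h1 := key (max n (Nj j)) n j (le_max_left _ _) hj
      have h2 := key (max n (Nj j)) (Nj j) j (le_max_right _ _) (hNj j)
      rw [← h1, h2]
    have htail : ∀ t : ℝ, ∃ J : ℕ, ∀ j, J ≤ j → act (φ t) (w j) = w j := by
      intro t
      obtain ⟨x, hx⟩ := stepA hfree hsup φ hhom t
      refine ⟨dd hfree hsup v₀ x, fun j hj => ?_⟩
      set n := Nj j with hnj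
      have hn : j ≤ dd hfree hsup v₀ (p n) := hNj j
      obtain ⟨q, hqS, hqmin⟩ := exists_min hfree hsup (S n) (hSne n) x
      have hqfix : act (φ t) q = q := by
        have hmem : act (φ t) q ∈ S n := by
          have hcomm : φ ((1 : ℝ) / 2 ^ n) * φ t = φ t * φ ((1 : ℝ) / 2 ^ n) := by
            rw [← hhom, ← hhom, add_comm]
          show act (φ ((1 : ℝ) / 2 ^ n)) (act (φ t) q) = act (φ t) q
          rw [← act_mul, hcomm, act_mul, (hqS : act (φ ((1 : ℝ) / 2 ^ n)) q = q)]
        have hdist : dd hfree hsup x (act (φ t) q) = dd hfree hsup x q := by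
          conv_lhs => rw [← hx]
          exact dd_act hfree hsup (φ t) x q
        have hmin2 : ∀ y ∈ S n, dd hfree hsup x (act (φ t) q) ≤ dd hfree hsup x y := by
          intro y hy
          rw [hdist]
          exact hqmin y hy
        exact (min_unique hfree hsup (hSconv n) hqS hqmin hmem hmin2).symm
      obtain ⟨m, r, px, qx, e1, e2, hcat⟩ := median hfree (geo hfree hsup v₀ x)
        (geo hfree hsup v₀ q) (geo_isPath hfree hsup _ _) (geo_isPath hfree hsup _ _)
      have hcat' : px.reverse.append qx = geo hfree hsup x q := path_eq_geo hfree hsup _ hcat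
      have hrlen : r.length + px.length = dd hfree hsup v₀ x := by
        have h := congrArg Walk.length e1
        rw [Walk.length_append] at h
        exact h.symm
      have hrle : r.length ≤ j := by omega
      have hgate := gate hfree hsup (hSconv n) (hpS n) (hpmin n) hqS
      have hwj : (geo hfree hsup v₀ q).getVert j = w j :=
        (hgate.2 j hn).trans (hcoh n j hn)
      have hgj : (geo hfree hsup v₀ q).getVert j = qx.getVert (j - r.length) := by
        conv_lhs => rw [e2]
        rw [Walk.getVert_append, if_neg (by omega)]
      have hcatv : (geo hfree hsup x q).getVert (px.length + (j - r.length))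
          = qx.getVert (j - r.length) := by
        rw [← hcat', Walk.getVert_append, Walk.length_reverse, if_neg (by omega),
          Nat.add_sub_cancel_left]
      have hfix := fix_getVert hfree hsup hx hqfix (px.length + (j - r.length))
      rw [hcatv] at hfix
      rw [← hwj, hgj]
      exact hfix
    have hTcover : ⋃ j : ℕ, {t : ℝ | act (φ t) (w j) = w j} = Set.univ := by
      apply Set.eq_univ_of_forall
      intro t
      obtain ⟨J, hJ⟩ := htail t
      exact Set.mem_iUnion.mpr ⟨J, hJ J le_rfl⟩
    obtain ⟨j, hjint⟩ := nonempty_interior_of_iUnion_of_closed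
      (fun j => hclosed (w j)) hTcover
    have hT0 : (0 : ℝ) ∈ {t : ℝ | act (φ t) (w j) = w j} := by
      show act (φ 0) (w j) = w j
      rw [phi_zero φ hhom, act_one]
    set Tsub : AddSubgroup ℝ :=
      { carrier := {t : ℝ | act (φ t) (w j) = w j}
        zero_mem' := hT0
        add_mem' := by
          intro s t' hs ht'
          show act (φ (s + t')) (w j) = w j
          rw [hhom, act_mul, (ht' : act (φ t') (w j) = w j), (hs : act (φ s) (w j) = w j)]
        neg_mem' := by
          intro s hs
          show act (φ (-s)) (w j) = w j
          rw [phi_neg φ hhom]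
          exact act_fix_inv hs } with hTsub
    obtain ⟨t₀, ht₀⟩ := hjint
    have hopen : IsOpen ((Tsub : Set ℝ)) :=
      AddSubgroup.isOpen_of_mem_nhds Tsub (mem_interior_iff_mem_nhds.mp ht₀)
    have hTuniv : {t : ℝ | act (φ t) (w j) = w j} = Set.univ := by
      rcases isClopen_iff.mp ⟨hclosed (w j), hopen⟩ with h | h
      · exact absurd (h ▸ hT0) (Set.notMem_empty 0)
      · exact h
    refine conclude φ (w j) (fun t => ?_)
    have ht : t ∈ {t : ℝ | act (φ t) (w j) = w j} := hTuniv ▸ Set.mem_univ t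
    exact ht


end AmalProof

/-- A continuous one-parameter subgroup of a topological group that is a free
amalgamated product of two closed subgroups is conjugate into one of the factors. -/
theorem oneParameter_conjugate_into_factor
    {𝒢 : Type*} [Group 𝒢] [TopologicalSpace 𝒢] [IsTopologicalGroup 𝒢]
    (O L : Subgroup 𝒢) (hO : IsClosed (O : Set 𝒢)) (hL : IsClosed (L : Set 𝒢))
    (hG : IsAmalgamatedProduct O L)
    (φ : ℝ → 𝒢) (hhom : ∀ s t : ℝ, φ (s + t) = φ s * φ t) (hcont : Continuous φ) :
    (∃ c : 𝒢, ∀ t : ℝ, c * φ t * c⁻¹ ∈ O) ∨ (∃ c : 𝒢, ∀ t : ℝ, c * φ t * c⁻¹ ∈ L) := by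
  exact AmalProof.main O L hO hL hG φ hhom hcont
end

section
/- If φ : ℝ → G is a group homomorphism into the free amalgamated product G = O *_{O∩L} L, and both φ(1) and φ(√2) are conjugate into O ∪ L with conjugating elements, then the image φ({m + n√2 : m,n ∈ ℤ}) has bounded length. -/
/-- Every element of a group generated by `O ⊔ L = ⊤` is a product of a word with
letters in `O ∪ L`. -/
lemma exists_word_of_sup_top {G : Type*} [Group G] (O L : Subgroup G)
    (h : O ⊔ L = ⊤) (g : G) :
    ∃ w : List G, (∀ x ∈ w, x ∈ O ∨ x ∈ L) ∧ w.prod = g := by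
  let S : Subgroup G :=
    { carrier := {g | ∃ w : List G, (∀ x ∈ w, x ∈ O ∨ x ∈ L) ∧ w.prod = g}
      one_mem' := ⟨[], by simp, rfl⟩
      mul_mem' := by
        rintro a b ⟨wa, hwa, rfl⟩ ⟨wb, hwb, rfl⟩
        exact ⟨wa ++ wb, by
          intro x hx
          rcases List.mem_append.mp hx with hx | hx
          · exact hwa x hx
          · exact hwb x hx, by simp⟩
      inv_mem' := by
        rintro a ⟨w, hw, rfl⟩
        refine ⟨(w.map Inv.inv).reverse, ?_, ?_⟩
        · intro x hx
          simp only [List.mem_reverse, List.mem_map] at hx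
          obtain ⟨y, hy, rfl⟩ := hx
          rcases hw y hy with h | h
          · exact Or.inl (O.inv_mem h)
          · exact Or.inr (L.inv_mem h)
        · rw [List.prod_reverse_noncomm]
          simp }
  have hO : O ≤ S := fun x hx => ⟨[x], by simp [hx], by simp⟩
  have hL : L ≤ S := fun x hx => ⟨[x], by simp [hx], by simp⟩
  have : (⊤ : Subgroup G) ≤ S := h ▸ sup_le hO hL
  exact this (Subgroup.mem_top g)

lemma conj_zpow' {G : Type*} [Group G] (c g : G) (m : ℤ) :
    (c * g * c⁻¹) ^ m = c * g ^ m * c⁻¹ := by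
  have : c * g * c⁻¹ = (MulAut.conj c) g := rfl
  rw [this, ← map_zpow]; rfl

/-- If `φ : ℝ → G` is a homomorphism into the free amalgamated product
`G = O *_{O ⊓ L} L` and both `φ(1)` and `φ(√2)` are conjugate into `O ∪ L`, then the
image `φ({m + n√2 : m, n ∈ ℤ})` has bounded length. -/
theorem image_of_dense_subgroup_bounded_length
    {G : Type*} [Group G] (O L : Subgroup G)
    (hG : IsAmalgamatedProduct O L)
    (φ : ℝ → G) (hφ : ∀ s t : ℝ, φ (s + t) = φ s * φ t)
    (h1 : ∃ c : G, c * φ 1 * c⁻¹ ∈ O ∨ c * φ 1 * c⁻¹ ∈ L)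
    (h2 : ∃ c : G, c * φ (Real.sqrt 2) * c⁻¹ ∈ O ∨ c * φ (Real.sqrt 2) * c⁻¹ ∈ L) :
    ∃ N : ℕ, ∀ m n : ℤ, amalLength O L (φ (m + n * Real.sqrt 2)) ≤ N := by
  obtain ⟨c, hc⟩ := h1
  obtain ⟨d, hd⟩ := h2
  -- basic homomorphism facts
  have hφ0 : φ 0 = 1 := by
    have h := hφ 0 0
    simp only [add_zero] at h
    exact (left_eq_mul.mp h)
  have hz : ∀ (k : ℤ) (x : ℝ), φ (k * x) = φ x ^ k := by
    intro k x
    induction k using Int.induction_on with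
    | zero => simpa using hφ0
    | succ n ih =>
        have : ((n : ℤ) + 1 : ℤ) * x = (n : ℤ) * x + x := by push_cast; ring
        rw [this, hφ, ih, zpow_add_one]
    | pred n ih =>
        have hinv : φ (-x) = (φ x)⁻¹ := by
          have h := hφ x (-x)
          rw [add_neg_cancel, hφ0] at h
          exact eq_inv_of_mul_eq_one_right h.symm
        have : ((-(n : ℤ) - 1 : ℤ) : ℝ) * x = ((-(n : ℤ) : ℤ) : ℝ) * x + (-x) := by
          push_cast; ring
        rw [this, hφ, ih, hinv, zpow_sub_one]
  -- words for the conjugators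
  obtain ⟨wc, hwc, hwcp⟩ := exists_word_of_sup_top O L hG.1 c
  obtain ⟨wc', hwc', hwcp'⟩ := exists_word_of_sup_top O L hG.1 c⁻¹
  obtain ⟨wd, hwd, hwdp⟩ := exists_word_of_sup_top O L hG.1 d
  obtain ⟨wd', hwd', hwdp'⟩ := exists_word_of_sup_top O L hG.1 d⁻¹
  refine ⟨wc'.length + 1 + wc.length + (wd'.length + 1 + wd.length), ?_⟩
  intro m n
  set x := c * φ 1 * c⁻¹ with hxdef
  set y := d * φ (Real.sqrt 2) * d⁻¹ with hydef
  have hx : x ∈ O ∨ x ∈ L := hc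
  have hy : y ∈ O ∨ y ∈ L := hd
  have hxm : x ^ m ∈ O ∨ x ^ m ∈ L := by
    rcases hx with h | h
    · exact Or.inl (O.zpow_mem h m)
    · exact Or.inr (L.zpow_mem h m)
  have hyn : y ^ n ∈ O ∨ y ^ n ∈ L := by
    rcases hy with h | h
    · exact Or.inl (O.zpow_mem h n)
    · exact Or.inr (L.zpow_mem h n)
  -- the explicit word
  have hprod : (wc' ++ [x ^ m] ++ wc ++ (wd' ++ [y ^ n] ++ wd)).prod
      = φ (m + n * Real.sqrt 2) := by
    have h1' : c⁻¹ * x ^ m * c = φ 1 ^ m := by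
      rw [hxdef, conj_zpow']; group
    have h2' : d⁻¹ * y ^ n * d = φ (Real.sqrt 2) ^ n := by
      rw [hydef, conj_zpow']; group
    have hsplit : φ ((m : ℝ) + n * Real.sqrt 2) = φ 1 ^ m * φ (Real.sqrt 2) ^ n := by
      rw [hφ]
      congr 1
      · have : (m : ℝ) = (m : ℤ) * 1 := by push_cast; ring
        rw [this, hz]
      · exact hz n _
    simp only [List.prod_append, List.prod_cons, List.prod_nil, mul_one,
      hwcp, hwcp', hwdp, hwdp', hsplit]
    rw [← h1', ← h2']
  have hmem : ∀ g ∈ wc' ++ [x ^ m] ++ wc ++ (wd' ++ [y ^ n] ++ wd), g ∈ O ∨ g ∈ L := by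
    intro g hg
    simp only [List.mem_append, List.mem_singleton] at hg
    rcases hg with ((hg | rfl) | hg) | ((hg | rfl) | hg)
    · exact hwc' g hg
    · exact hxm
    · exact hwc g hg
    · exact hwd' g hg
    · exact hyn
    · exact hwd g hg
  have hlen : (wc' ++ [x ^ m] ++ wc ++ (wd' ++ [y ^ n] ++ wd)).length
      = wc'.length + 1 + wc.length + (wd'.length + 1 + wd.length) := by
    simp only [List.length_append, List.length_singleton]
  exact Nat.sInf_le ⟨_, hlen, hmem, hprod⟩
end

section
/- For entire functions f, g, h, k : ℂ → ℂ, the Lie bracket of the overshear vector fields satisfies [OF_{f,g}, OF_{h,k}] = x·SF_{gh−kf}, where OF_{f,g} = p'(z)(z f(x)+g(x)) ∂/∂y + x(z f(x)+g(x)) ∂/∂z and SF_m = p'(z) m(x) ∂/∂y + x m(x) ∂/∂z. -/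
open Polynomial

/-- The Lie bracket of vector fields on `ℂ³` (written in coordinates, as maps
`ℂ³ → ℂ³`): `[V, W](q) = DW(q)·V(q) − DV(q)·W(q)`, so that `[V,W] = V∘W − W∘V` as
derivations on functions. -/
noncomputable def vfBracket (V W : ℂ × ℂ × ℂ → ℂ × ℂ × ℂ) (q : ℂ × ℂ × ℂ) : ℂ × ℂ × ℂ :=
  fderiv ℂ W q (V q) - fderiv ℂ V q (W q)

/-- The overshear vector field
`OF_{f,g} = p'(z)(z f(x) + g(x)) ∂/∂y + x (z f(x) + g(x)) ∂/∂z`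
in coordinates `(x, y, z)` on `ℂ³`. -/
noncomputable def OF (p : Polynomial ℂ) (f g : ℂ → ℂ) (q : ℂ × ℂ × ℂ) : ℂ × ℂ × ℂ :=
  (0, (p.derivative.eval q.2.2) * (q.2.2 * f q.1 + g q.1),
    q.1 * (q.2.2 * f q.1 + g q.1))

/-- The shear vector field `SF_m = p'(z) m(x) ∂/∂y + x m(x) ∂/∂z`, i.e. `OF_{0,m}`. -/
noncomputable def SF (p : Polynomial ℂ) (m : ℂ → ℂ) (q : ℂ × ℂ × ℂ) : ℂ × ℂ × ℂ :=
  (0, (p.derivative.eval q.2.2) * m q.1, q.1 * m q.1)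

lemma OF_fderiv_apply (p : Polynomial ℂ) (f g : ℂ → ℂ)
    (hf : Differentiable ℂ f) (hg : Differentiable ℂ g) (q v : ℂ × ℂ × ℂ) :
    fderiv ℂ (OF p f g) q v =
      (0,
       p.derivative.derivative.eval q.2.2 * v.2.2 * (q.2.2 * f q.1 + g q.1)
         + p.derivative.eval q.2.2 *
             (v.2.2 * f q.1 + q.2.2 * (deriv f q.1 * v.1) + deriv g q.1 * v.1),
       v.1 * (q.2.2 * f q.1 + g q.1)
         + q.1 * (v.2.2 * f q.1 + q.2.2 * (deriv f q.1 * v.1) + deriv g q.1 * v.1)) := by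
  have hx : HasFDerivAt (fun q : ℂ × ℂ × ℂ => q.1)
      (ContinuousLinearMap.fst ℂ ℂ (ℂ × ℂ)) q := hasFDerivAt_fst
  have hz : HasFDerivAt (fun q : ℂ × ℂ × ℂ => q.2.2)
      ((ContinuousLinearMap.snd ℂ ℂ ℂ).comp (ContinuousLinearMap.snd ℂ ℂ (ℂ × ℂ))) q :=
    hasFDerivAt_snd.comp q hasFDerivAt_snd
  have hfx : HasFDerivAt (fun q : ℂ × ℂ × ℂ => f q.1)
      ((deriv f q.1) • ContinuousLinearMap.fst ℂ ℂ (ℂ × ℂ)) q :=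
    ((hf q.1).hasDerivAt).comp_hasFDerivAt q hx
  have hgx : HasFDerivAt (fun q : ℂ × ℂ × ℂ => g q.1)
      ((deriv g q.1) • ContinuousLinearMap.fst ℂ ℂ (ℂ × ℂ)) q :=
    ((hg q.1).hasDerivAt).comp_hasFDerivAt q hx
  have hPz : HasFDerivAt (fun q : ℂ × ℂ × ℂ => p.derivative.eval q.2.2)
      ((p.derivative.derivative.eval q.2.2) •
        ((ContinuousLinearMap.snd ℂ ℂ ℂ).comp (ContinuousLinearMap.snd ℂ ℂ (ℂ × ℂ)))) q :=
    by have h := (p.derivative.hasDerivAt q.2.2).comp_hasFDerivAt q hz; exact h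
  have hu := (hz.mul hfx).add hgx
  have hA := hPz.mul hu
  have hB := hx.mul hu
  have hOF : HasFDerivAt (OF p f g) _ q :=
    HasFDerivAt.prodMk (hasFDerivAt_const (0 : ℂ) q) (hA.prodMk hB)
  rw [hOF.fderiv]
  simp [ContinuousLinearMap.prod_apply, ContinuousLinearMap.add_apply,
    ContinuousLinearMap.smul_apply, ContinuousLinearMap.comp_apply,
    ContinuousLinearMap.coe_fst', ContinuousLinearMap.coe_snd', smul_eq_mul]
  constructor <;> ring

/-- The bracket of two overshear fields:
`[OF_{f,g}, OF_{h,k}] = x · SF_{gh − kf}`. -/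
theorem bracket_OF_OF (p : Polynomial ℂ) (f g h k : ℂ → ℂ)
    (hf : Differentiable ℂ f) (hg : Differentiable ℂ g)
    (hh : Differentiable ℂ h) (hk : Differentiable ℂ k) :
    ∀ q : ℂ × ℂ × ℂ,
      vfBracket (OF p f g) (OF p h k) q =
        q.1 • SF p (fun x => g x * h x - k x * f x) q := by
  intro q
  rw [vfBracket, OF_fderiv_apply p h k hh hk, OF_fderiv_apply p f g hf hg]
  simp only [OF, SF, Prod.smul_def, smul_eq_mul, Prod.mk_sub_mk, Prod.mk.injEq]
  refine ⟨by ring, by ring, by ring⟩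
end

section
/- For entire functions h, f, g, the bracket of a shear field with an overshear field satisfies [SF_h, OF_{f,g}] = x f(x)·SF_h; in particular, any two shear fields commute. -/
open Polynomial

lemma fderiv_OF_apply (p : Polynomial ℂ) (f g : ℂ → ℂ) (hf : Differentiable ℂ f)
    (hg : Differentiable ℂ g) (q v : ℂ × ℂ × ℂ) :
    fderiv ℂ (OF p f g) q v =
      (0,
        p.derivative.derivative.eval q.2.2 * v.2.2 * (q.2.2 * f q.1 + g q.1)
          + p.derivative.eval q.2.2
            * (v.2.2 * f q.1 + (q.2.2 * deriv f q.1 + deriv g q.1) * v.1),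
        v.1 * (q.2.2 * f q.1 + g q.1)
          + q.1 * (v.2.2 * f q.1 + (q.2.2 * deriv f q.1 + deriv g q.1) * v.1)) := by
  have hx : HasFDerivAt (fun q : ℂ × ℂ × ℂ => q.1)
      (ContinuousLinearMap.fst ℂ ℂ (ℂ × ℂ)) q := hasFDerivAt_fst
  have hz : HasFDerivAt (fun q : ℂ × ℂ × ℂ => q.2.2)
      ((ContinuousLinearMap.snd ℂ ℂ ℂ).comp (ContinuousLinearMap.snd ℂ ℂ (ℂ × ℂ))) q :=
    hasFDerivAt_snd.snd
  have hfx : HasFDerivAt (fun q : ℂ × ℂ × ℂ => f q.1)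
      (deriv f q.1 • ContinuousLinearMap.fst ℂ ℂ (ℂ × ℂ)) q :=
    (hf q.1).hasDerivAt.comp_hasFDerivAt q hx
  have hgx : HasFDerivAt (fun q : ℂ × ℂ × ℂ => g q.1)
      (deriv g q.1 • ContinuousLinearMap.fst ℂ ℂ (ℂ × ℂ)) q :=
    (hg q.1).hasDerivAt.comp_hasFDerivAt q hx
  have hP : HasFDerivAt (fun q : ℂ × ℂ × ℂ => p.derivative.eval q.2.2)
      (p.derivative.derivative.eval q.2.2 •
        ((ContinuousLinearMap.snd ℂ ℂ ℂ).comp (ContinuousLinearMap.snd ℂ ℂ (ℂ × ℂ)))) q :=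
    HasDerivAt.comp_hasFDerivAt (h₂ := fun x => p.derivative.eval x) q
      (p.derivative.hasDerivAt q.2.2) hz
  have hu := (hz.mul hfx).add hgx
  have H := HasFDerivAt.prodMk (hasFDerivAt_const (0 : ℂ) q) ((hP.mul hu).prodMk (hx.mul hu))
  have H' : HasFDerivAt (OF p f g) _ q := H
  rw [H'.fderiv]
  simp [ContinuousLinearMap.prod_apply, ContinuousLinearMap.add_apply,
    ContinuousLinearMap.smul_apply, ContinuousLinearMap.comp_apply, smul_eq_mul]
  constructor <;> ring

lemma SF_eq_OF (p : Polynomial ℂ) (m : ℂ → ℂ) : SF p m = OF p (fun _ => 0) m := by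
  funext q
  simp [SF, OF]

lemma fderiv_SF_apply (p : Polynomial ℂ) (m : ℂ → ℂ) (hm : Differentiable ℂ m)
    (q v : ℂ × ℂ × ℂ) :
    fderiv ℂ (SF p m) q v =
      (0,
        p.derivative.derivative.eval q.2.2 * v.2.2 * m q.1
          + p.derivative.eval q.2.2 * (deriv m q.1 * v.1),
        v.1 * m q.1 + q.1 * (deriv m q.1 * v.1)) := by
  rw [SF_eq_OF]
  rw [fderiv_OF_apply p (fun _ => 0) m (differentiable_const 0) hm q v]
  simp

/-- The bracket of a shear field with an overshear field:
`[SF_h, OF_{f,g}] = x f(x) · SF_h`; in particular any two shear fields commute. -/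
theorem bracket_SF_OF (p : Polynomial ℂ) (f g h : ℂ → ℂ)
    (hf : Differentiable ℂ f) (hg : Differentiable ℂ g) (hh : Differentiable ℂ h) :
    (∀ q : ℂ × ℂ × ℂ,
        vfBracket (SF p h) (OF p f g) q = (q.1 * f q.1) • SF p h q) ∧
    ∀ m₁ m₂ : ℂ → ℂ, Differentiable ℂ m₁ → Differentiable ℂ m₂ →
      ∀ q : ℂ × ℂ × ℂ, vfBracket (SF p m₁) (SF p m₂) q = 0 := by
  constructor
  · intro q
    rw [vfBracket, fderiv_OF_apply p f g hf hg q (SF p h q),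
      fderiv_SF_apply p h hh q (OF p f g q)]
    simp only [SF, OF, Prod.smul_mk, Prod.mk_sub_mk, smul_eq_mul]
    refine Prod.ext (by ring) (Prod.ext (by ring) (by ring))
  · intro m₁ m₂ h₁ h₂ q
    rw [vfBracket, fderiv_SF_apply p m₂ h₂ q (SF p m₁ q),
      fderiv_SF_apply p m₁ h₁ q (SF p m₂ q)]
    simp only [SF, Prod.mk_sub_mk, Prod.ext_iff, Prod.fst_zero, Prod.snd_zero]
    refine ⟨by ring, by ring, by ring⟩
end

section
/- Let f, g, h be fixed entire functions with f and h not identically zero. Then the Lie algebra of vector fields generated by OF_{f,g} and SF_h is infinite-dimensional; indeed it equals span{OF_{f,g}, SF_{x^n f^n h} : n ≥ 0}, and the fields SF_{x^n f^n h}, n ≥ 0, together with OF_{f,g}, are linearly independent over ℂ. -/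
open Polynomial

/-- The Lie algebra of vector fields generated by a set `S`: the smallest
`ℂ`-submodule of `ℂ³ → ℂ³` containing `S` and closed under the Lie bracket. -/
noncomputable def lieGenerated (S : Set (ℂ × ℂ × ℂ → ℂ × ℂ × ℂ)) :
    Submodule ℂ (ℂ × ℂ × ℂ → ℂ × ℂ × ℂ) :=
  sInf {M | S ⊆ M ∧ ∀ V ∈ M, ∀ W ∈ M, vfBracket V W ∈ M}

namespace LieAux

/-! ### Differentiability of the fields -/

lemma diff_OF (p : Polynomial ℂ) (f g : ℂ → ℂ) (hf : Differentiable ℂ f)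
    (hg : Differentiable ℂ g) : Differentiable ℂ (OF p f g) := by
  have hx : Differentiable ℂ (fun q : ℂ × ℂ × ℂ => q.1) := differentiable_fst
  have hz : Differentiable ℂ (fun q : ℂ × ℂ × ℂ => q.2.2) := differentiable_snd.snd
  have hP : Differentiable ℂ (fun q : ℂ × ℂ × ℂ => eval q.2.2 (derivative p)) :=
    ((derivative p).differentiable).comp hz
  have hlin : Differentiable ℂ (fun q : ℂ × ℂ × ℂ => q.2.2 * f q.1 + g q.1) :=
    (hz.mul (hf.comp hx)).add (hg.comp hx)
  exact (differentiable_const (0:ℂ)).prodMk ((hP.mul hlin).prodMk (hx.mul hlin))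

lemma diff_SF (p : Polynomial ℂ) (m : ℂ → ℂ) (hm : Differentiable ℂ m) :
    Differentiable ℂ (SF p m) := by
  have hx : Differentiable ℂ (fun q : ℂ × ℂ × ℂ => q.1) := differentiable_fst
  have hz : Differentiable ℂ (fun q : ℂ × ℂ × ℂ => q.2.2) := differentiable_snd.snd
  have hP : Differentiable ℂ (fun q : ℂ × ℂ × ℂ => eval q.2.2 (derivative p)) :=
    ((derivative p).differentiable).comp hz
  exact (differentiable_const (0:ℂ)).prodMk ((hP.mul (hm.comp hx)).prodMk (hx.mul (hm.comp hx)))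

/-! ### Computation of the bracket -/

lemma fderiv_line {W : ℂ × ℂ × ℂ → ℂ × ℂ × ℂ} (hW : Differentiable ℂ W)
    (q v : ℂ × ℂ × ℂ) {d : ℂ × ℂ × ℂ}
    (hd : HasDerivAt (fun t : ℂ => W (q + t • v)) d 0) : fderiv ℂ W q v = d := by
  have h1 : HasDerivAt (fun t : ℂ => q + t • v) v 0 := by
    simpa using ((hasDerivAt_id (0:ℂ)).smul_const v).const_add q
  have h2 := (hW (q + (0:ℂ) • v)).hasFDerivAt.comp_hasDerivAt 0 h1
  simp only [zero_smul, add_zero, Function.comp_def] at h2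
  exact h2.unique hd

lemma fderiv_field_apply (p : Polynomial ℂ) (f g b : ℂ → ℂ) (hf : Differentiable ℂ f)
    (hg : Differentiable ℂ g) (hb : Differentiable ℂ b) (d : ℂ) (x y z v2 v3 : ℂ) :
    fderiv ℂ (d • OF p f g + SF p b) (x, y, z) (0, v2, v3) =
      (0,
        d * (eval z (derivative (derivative p)) * v3 * (z * f x + g x)
            + eval z (derivative p) * (v3 * f x))
          + eval z (derivative (derivative p)) * v3 * b x,
        d * (x * (v3 * f x))) := by
  have hW : Differentiable ℂ (d • OF p f g + SF p b) :=
    ((diff_OF p f g hf hg).const_smul d).add (diff_SF p b hb)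
  refine fderiv_line hW _ _ ?_
  have hfun : (fun t : ℂ => (d • OF p f g + SF p b) ((x, y, z) + t • ((0:ℂ), v2, v3))) =
      fun t : ℂ => ((0:ℂ),
        d * (eval (z + t * v3) (derivative p) * ((z + t * v3) * f x + g x))
          + eval (z + t * v3) (derivative p) * b x,
        d * (x * ((z + t * v3) * f x + g x)) + x * b x) := by
    funext t
    simp [OF, SF, Prod.ext_iff, smul_eq_mul, mul_zero, add_zero]
  rw [hfun]
  have hzt : HasDerivAt (fun t : ℂ => z + t * v3) v3 0 := by
    simpa using ((hasDerivAt_id (0:ℂ)).mul_const v3).const_add z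
  have hP : HasDerivAt (fun t : ℂ => eval (z + t * v3) (derivative p))
      (eval z (derivative (derivative p)) * v3) 0 := by
    simpa [Function.comp_def] using
      (HasDerivAt.comp 0 ((derivative p).hasDerivAt (z + 0 * v3)) hzt)
  have hlin : HasDerivAt (fun t : ℂ => (z + t * v3) * f x + g x) (v3 * f x) 0 :=
    (hzt.mul_const (f x)).add_const (g x)
  have hprod : HasDerivAt
      (fun t : ℂ => eval (z + t * v3) (derivative p) * ((z + t * v3) * f x + g x))
      (eval z (derivative (derivative p)) * v3 * (z * f x + g x)
        + eval z (derivative p) * (v3 * f x)) 0 := by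
    simpa [Pi.mul_def] using hP.mul hlin
  have H2 : HasDerivAt (fun t : ℂ =>
      d * (eval (z + t * v3) (derivative p) * ((z + t * v3) * f x + g x))
        + eval (z + t * v3) (derivative p) * b x)
      (d * (eval z (derivative (derivative p)) * v3 * (z * f x + g x)
          + eval z (derivative p) * (v3 * f x))
        + eval z (derivative (derivative p)) * v3 * b x) 0 :=
    (hprod.const_mul d).add (hP.mul_const (b x))
  have H3 : HasDerivAt (fun t : ℂ => d * (x * ((z + t * v3) * f x + g x)) + x * b x)
      (d * (x * (v3 * f x))) 0 :=
    ((hlin.const_mul x).const_mul d).add_const (x * b x)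
  exact HasDerivAt.prodMk (hasDerivAt_const (0:ℂ) (0:ℂ)) (H2.prodMk H3)

lemma bracket_master (p : Polynomial ℂ) (f g a b : ℂ → ℂ) (hf : Differentiable ℂ f)
    (hg : Differentiable ℂ g) (ha : Differentiable ℂ a) (hb : Differentiable ℂ b) (c d : ℂ) :
    vfBracket (c • OF p f g + SF p a) (d • OF p f g + SF p b)
      = SF p (fun x => x * f x * (d * a x - c * b x)) := by
  funext q
  obtain ⟨x, y, z⟩ := q
  have hva : (c • OF p f g + SF p a) (x, y, z) = ((0:ℂ),
      c * (eval z (derivative p) * (z * f x + g x)) + eval z (derivative p) * a x,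
      c * (x * (z * f x + g x)) + x * a x) := by
    simp [OF, SF, Prod.ext_iff, smul_eq_mul]
  have hvb : (d • OF p f g + SF p b) (x, y, z) = ((0:ℂ),
      d * (eval z (derivative p) * (z * f x + g x)) + eval z (derivative p) * b x,
      d * (x * (z * f x + g x)) + x * b x) := by
    simp [OF, SF, Prod.ext_iff, smul_eq_mul]
  show fderiv ℂ (d • OF p f g + SF p b) (x,y,z) ((c • OF p f g + SF p a) (x,y,z))
      - fderiv ℂ (c • OF p f g + SF p a) (x,y,z) ((d • OF p f g + SF p b) (x,y,z))
      = SF p (fun x => x * f x * (d * a x - c * b x)) (x, y, z)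
  rw [hva, hvb, fderiv_field_apply p f g b hf hg hb d x y z _ _,
    fderiv_field_apply p f g a hf hg ha c x y z _ _]
  simp only [SF, Prod.mk_sub_mk, Prod.mk.injEq, sub_self]
  refine ⟨trivial, ?_, ?_⟩ <;> ring

/-! ### Analytic lemmas -/

lemma fun_eq_zero_of_mul (φ : ℂ → ℂ) (hc : Continuous φ) (H : ∀ x : ℂ, x * φ x = 0) :
    φ = 0 := by
  apply Continuous.ext_on (dense_compl_singleton (0:ℂ)) hc continuous_const
  intro x hx
  have hx0 : x ≠ 0 := hx
  exact (mul_eq_zero.1 (H x)).resolve_left hx0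

lemma eq_zero_of_entire_mul {A B : ℂ → ℂ} (hA : Differentiable ℂ A) (hBc : Continuous B)
    (hmul : ∀ x, A x * B x = 0) (hA0 : A ≠ 0) : ∀ x, B x = 0 := by
  by_contra hB
  push_neg at hB
  obtain ⟨x₀, hx₀⟩ := hB
  have hev : A =ᶠ[nhds x₀] 0 := by
    filter_upwards [hBc.continuousAt.eventually_ne hx₀] with x hx
    exact (mul_eq_zero.1 (hmul x)).resolve_right hx
  have han : AnalyticOnNhd ℂ A Set.univ := hA.differentiableOn.analyticOnNhd isOpen_univ
  have := han.eqOn_zero_of_preconnected_of_eventuallyEq_zero isPreconnected_univ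
    (Set.mem_univ x₀) hev
  exact hA0 (funext fun x => this (Set.mem_univ x))

lemma range_infinite {u : ℂ → ℂ} (hc : Continuous u) (h0 : u 0 = 0) {x₁ : ℂ}
    (h1 : u x₁ ≠ 0) : (Set.range u).Infinite := by
  have hφ : Continuous fun x : ℂ => ‖u x‖ := continuous_norm.comp hc
  have h := (isPreconnected_univ (α := ℂ)).intermediate_value (Set.mem_univ 0)
    (Set.mem_univ x₁) hφ.continuousOn
  rw [h0, norm_zero] at h
  have hIcc : (Set.Icc (0:ℝ) ‖u x₁‖).Infinite :=
    Set.Icc_infinite (norm_pos_iff.mpr h1)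
  have h3 : ((fun x : ℂ => ‖u x‖) '' Set.univ).Infinite := hIcc.mono h
  have hsubset : (fun x : ℂ => ‖u x‖) '' Set.univ ⊆ (fun w : ℂ => ‖w‖) '' Set.range u := by
    rintro y ⟨x, -, rfl⟩
    exact ⟨u x, ⟨x, rfl⟩, rfl⟩
  exact Set.Infinite.of_image (fun w : ℂ => ‖w‖) (h3.mono hsubset)

/-! ### Span lemmas -/

lemma span_SF_form (p : Polynomial ℂ) (F : ℕ → ℂ → ℂ) :
    ∀ V ∈ Submodule.span ℂ (Set.range fun n : ℕ => SF p (F n)), ∃ m : ℂ → ℂ, V = SF p m := by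
  intro V hV
  induction hV using Submodule.span_induction with
  | mem x hx => obtain ⟨n, rfl⟩ := hx; exact ⟨F n, rfl⟩
  | zero => exact ⟨fun _ => 0, by funext q; simp [SF]; rfl⟩
  | add x y hx hy ihx ihy =>
      obtain ⟨m, rfl⟩ := ihx; obtain ⟨m', rfl⟩ := ihy
      exact ⟨fun t => m t + m' t, by
        funext q; simp [SF, Prod.ext_iff, mul_add]; try exact ⟨trivial, trivial⟩⟩
  | smul a x hx ih =>
      obtain ⟨m, rfl⟩ := ih
      exact ⟨fun t => a * m t, by
        funext q; simp [SF, Prod.ext_iff, smul_eq_mul, mul_left_comm]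
        try exact ⟨trivial, trivial⟩⟩

section Main

variable (p : Polynomial ℂ) (f g h : ℂ → ℂ)

/-- the multiplier functions `x ^ n f ^ n h` -/
noncomputable def mf (n : ℕ) : ℂ → ℂ := fun x => x ^ n * f x ^ n * h x

lemma mspan_diff (hf : Differentiable ℂ f) (hh : Differentiable ℂ h) :
    ∀ m ∈ Submodule.span ℂ (Set.range (mf f h)), Differentiable ℂ m := by
  intro m hm
  induction hm using Submodule.span_induction with
  | mem x hx =>
      obtain ⟨n, rfl⟩ := hx
      exact ((differentiable_pow n).mul (hf.pow n)).mul hh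
  | zero => exact differentiable_const 0
  | add x y hx hy ihx ihy => exact ihx.add ihy
  | smul a x hx ih => exact ih.const_smul a

lemma mspan_xf : ∀ m ∈ Submodule.span ℂ (Set.range (mf f h)),
    (fun x => x * f x * m x) ∈ Submodule.span ℂ (Set.range (mf f h)) := by
  intro m hm
  induction hm using Submodule.span_induction with
  | mem x hx =>
      obtain ⟨n, rfl⟩ := hx
      have : (fun x => x * f x * mf f h n x) = mf f h (n + 1) := by
        funext x; simp only [mf]; ring
      rw [this]
      exact Submodule.subset_span ⟨n + 1, rfl⟩
  | zero =>
      have : (fun x : ℂ => x * f x * (0 : ℂ → ℂ) x) = 0 := by funext x; simp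
      rw [this]; exact Submodule.zero_mem _
  | add a b ha hb iha ihb =>
      have : (fun x => x * f x * (a + b) x)
          = (fun x => x * f x * a x) + fun x => x * f x * b x := by
        funext x; simp [Pi.add_apply]; ring
      rw [this]; exact Submodule.add_mem _ iha ihb
  | smul c a ha ih =>
      have : (fun x => x * f x * (c • a) x) = c • fun x => x * f x * a x := by
        funext x; simp [Pi.smul_apply, smul_eq_mul]; ring
      rw [this]; exact Submodule.smul_mem _ _ ih

lemma SF_mem_span : ∀ m ∈ Submodule.span ℂ (Set.range (mf f h)),
    SF p m ∈ Submodule.span ℂ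
      ({OF p f g} ∪ Set.range fun n : ℕ => SF p (mf f h n)) := by
  intro m hm
  induction hm using Submodule.span_induction with
  | mem x hx =>
      obtain ⟨n, rfl⟩ := hx
      exact Submodule.subset_span (Or.inr ⟨n, rfl⟩)
  | zero =>
      have : SF p (0 : ℂ → ℂ) = 0 := by funext q; simp [SF]
      rw [this]; exact Submodule.zero_mem _
  | add a b ha hb iha ihb =>
      have : SF p (a + b) = SF p a + SF p b := by
        funext q; simp [SF, Prod.ext_iff, mul_add]; try exact ⟨trivial, trivial⟩
      rw [this]; exact Submodule.add_mem _ iha ihb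
  | smul c a ha ih =>
      have : SF p (c • a) = c • SF p a := by
        funext q; simp [SF, Prod.ext_iff, smul_eq_mul, mul_left_comm]
        try exact ⟨trivial, trivial⟩
      rw [this]; exact Submodule.smul_mem _ _ ih

lemma repr_lemma : ∀ V ∈ Submodule.span ℂ
      ({OF p f g} ∪ Set.range fun n : ℕ => SF p (mf f h n)),
    ∃ c : ℂ, ∃ m : ℂ → ℂ, m ∈ Submodule.span ℂ (Set.range (mf f h)) ∧
      V = c • OF p f g + SF p m := by
  intro V hV
  induction hV using Submodule.span_induction with
  | mem x hx =>
      rcases hx with rfl | ⟨n, rfl⟩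
      · refine ⟨1, fun _ => 0, ?_, ?_⟩
        · have : (fun _ : ℂ => (0:ℂ)) = (0 : ℂ → ℂ) := rfl
          rw [this]; exact Submodule.zero_mem _
        · funext q; simp [OF, SF, Prod.ext_iff]
      · exact ⟨0, mf f h n, Submodule.subset_span ⟨n, rfl⟩, by
          funext q; simp [OF, SF, Prod.ext_iff]⟩
  | zero =>
      refine ⟨0, fun _ => 0, ?_, ?_⟩
      · have : (fun _ : ℂ => (0:ℂ)) = (0 : ℂ → ℂ) := rfl
        rw [this]; exact Submodule.zero_mem _
      · funext q; simp [OF, SF, Prod.ext_iff]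
  | add x y hx hy ihx ihy =>
      obtain ⟨c, m, hmS, rfl⟩ := ihx
      obtain ⟨c', m', hmS', rfl⟩ := ihy
      refine ⟨c + c', m + m', Submodule.add_mem _ hmS hmS', ?_⟩
      funext q
      simp only [Pi.add_apply, Pi.smul_apply, Prod.ext_iff, OF, SF,
        Prod.smul_mk, Prod.mk_add_mk, smul_eq_mul]
      refine ⟨by ring, by ring, by ring⟩
  | smul t x hx ih =>
      obtain ⟨c, m, hmS, rfl⟩ := ih
      refine ⟨t * c, t • m, Submodule.smul_mem _ _ hmS, ?_⟩
      funext q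
      simp only [Pi.add_apply, Pi.smul_apply, Prod.ext_iff, OF, SF,
        Prod.smul_mk, Prod.mk_add_mk, smul_eq_mul]
      refine ⟨by ring, by ring, by ring⟩

end Main

end LieAux

/-- For entire `f, g, h` with `f, h ≢ 0`, the Lie algebra generated by `OF_{f,g}` and
`SF_h` is infinite dimensional: it equals
`span {OF_{f,g}, SF_{xⁿ fⁿ h} : n ≥ 0}`, and these fields are linearly independent. -/
theorem lieGenerated_OF_SF_infiniteDimensional (p : Polynomial ℂ)
    (f g h : ℂ → ℂ)
    (hf : Differentiable ℂ f) (hg : Differentiable ℂ g) (hh : Differentiable ℂ h)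
    (hf0 : f ≠ 0) (hh0 : h ≠ 0) :
    lieGenerated {OF p f g, SF p h} =
        Submodule.span ℂ
          ({OF p f g} ∪ Set.range fun n : ℕ =>
            SF p (fun x => x ^ n * f x ^ n * h x)) ∧
      LinearIndependent ℂ
        (fun o : Option ℕ =>
          Option.elim o (OF p f g)
            (fun n => SF p (fun x => x ^ n * f x ^ n * h x))) ∧
      ¬ FiniteDimensional ℂ (lieGenerated {OF p f g, SF p h}) := by

  classical
  -- the candidate span
  have hSFh0 : SF p h = SF p (LieAux.mf f h 0) := by
    funext q; simp [SF, LieAux.mf]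
  -- the span is closed under brackets
  have hclosed : ∀ V ∈ Submodule.span ℂ
        ({OF p f g} ∪ Set.range fun n : ℕ => SF p (LieAux.mf f h n)),
      ∀ W ∈ Submodule.span ℂ
        ({OF p f g} ∪ Set.range fun n : ℕ => SF p (LieAux.mf f h n)),
      vfBracket V W ∈ Submodule.span ℂ
        ({OF p f g} ∪ Set.range fun n : ℕ => SF p (LieAux.mf f h n)) := by
    intro V hV W hW
    obtain ⟨c, a, haS, rfl⟩ := LieAux.repr_lemma p f g h V hV
    obtain ⟨d, b, hbS, rfl⟩ := LieAux.repr_lemma p f g h W hW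
    rw [LieAux.bracket_master p f g a b hf hg
      (LieAux.mspan_diff f h hf hh a haS) (LieAux.mspan_diff f h hf hh b hbS) c d]
    have hmem : (fun x => d * a x - c * b x) ∈ Submodule.span ℂ (Set.range (LieAux.mf f h)) :=
      Submodule.sub_mem _ (Submodule.smul_mem _ d haS) (Submodule.smul_mem _ c hbS)
    exact LieAux.SF_mem_span p f g h _ (LieAux.mspan_xf f h _ hmem)
  -- basic membership facts for the generated Lie algebra
  have hOFmem : OF p f g ∈ lieGenerated {OF p f g, SF p h} := by
    unfold lieGenerated
    rw [Submodule.mem_sInf]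
    exact fun M' hM' => hM'.1 (Or.inl rfl)
  have hSFhmem : SF p h ∈ lieGenerated {OF p f g, SF p h} := by
    unfold lieGenerated
    rw [Submodule.mem_sInf]
    exact fun M' hM' => hM'.1 (Or.inr rfl)
  have hbr : ∀ V ∈ lieGenerated {OF p f g, SF p h}, ∀ W ∈ lieGenerated {OF p f g, SF p h},
      vfBracket V W ∈ lieGenerated {OF p f g, SF p h} := by
    intro V hV W hW
    unfold lieGenerated at hV hW ⊢
    rw [Submodule.mem_sInf] at hV hW ⊢
    intro M' hM'
    exact hM'.2 V (hV M' hM') W (hW M' hM')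
  have hSFn : ∀ n : ℕ, SF p (LieAux.mf f h n) ∈ lieGenerated {OF p f g, SF p h} := by
    intro n
    induction n with
    | zero => rw [← hSFh0]; exact hSFhmem
    | succ n ih =>
      have e1 : SF p (LieAux.mf f h n) = (0:ℂ) • OF p f g + SF p (LieAux.mf f h n) := by
        funext q; simp
      have e2 : OF p f g = (1:ℂ) • OF p f g + SF p (fun _ => (0:ℂ)) := by
        funext q; simp [OF, SF, Prod.ext_iff]
      have key := LieAux.bracket_master p f g (LieAux.mf f h n) (fun _ => (0:ℂ)) hf hg
        (LieAux.mspan_diff f h hf hh _ (Submodule.subset_span ⟨n, rfl⟩))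
        (differentiable_const (0:ℂ)) 0 1
      rw [← e1, ← e2] at key
      have e3 : (fun x => x * f x * ((1:ℂ) * LieAux.mf f h n x - 0 * 0)) = LieAux.mf f h (n+1) := by
        funext x; simp only [LieAux.mf]; ring
      rw [e3] at key
      rw [← key]
      exact hbr _ ih _ hOFmem
  -- the span equality
  have hM : lieGenerated {OF p f g, SF p h} = Submodule.span ℂ
      ({OF p f g} ∪ Set.range fun n : ℕ => SF p (LieAux.mf f h n)) := by
    apply le_antisymm
    · apply sInf_le
      refine ⟨?_, hclosed⟩
      intro V hV
      simp only [Set.mem_insert_iff, Set.mem_singleton_iff] at hV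
      rcases hV with rfl | rfl
      · exact Submodule.subset_span (Or.inl rfl)
      · rw [hSFh0]; exact Submodule.subset_span (Or.inr ⟨0, rfl⟩)
    · rw [Submodule.span_le]
      rintro V (hV | ⟨n, rfl⟩)
      · rw [Set.mem_singleton_iff] at hV
        subst hV
        exact hOFmem
      · exact hSFn n
  -- linear independence of the shear fields
  have hLIsf : LinearIndependent ℂ (fun n : ℕ => SF p (LieAux.mf f h n)) := by
    rw [linearIndependent_iff']
    intro s cfun hsum n hn
    have hxid : ∀ x : ℂ, (x * h x) * eval (x * f x) (∑ k ∈ s, C (cfun k) * X ^ k) = 0 := by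
      intro x
      have e := congrFun hsum (x, 0, 0)
      have e2 := congrArg (fun w : ℂ × ℂ × ℂ => w.2.2) e
      simp only [Finset.sum_apply, Pi.smul_apply, Prod.snd_sum, Prod.smul_snd, SF,
        smul_eq_mul, Pi.zero_apply, Prod.snd_zero] at e2
      have e3 : (x * h x) * eval (x * f x) (∑ k ∈ s, C (cfun k) * X ^ k)
          = ∑ k ∈ s, cfun k * (x * LieAux.mf f h k x) := by
        rw [eval_finset_sum, Finset.mul_sum]
        refine Finset.sum_congr rfl fun k _ => ?_
        simp only [eval_mul, eval_C, eval_pow, eval_X, LieAux.mf, mul_pow]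
        ring
      rw [e3]
      exact e2
    have hA0 : (fun x : ℂ => x * h x) ≠ 0 := by
      intro hc
      exact hh0 (LieAux.fun_eq_zero_of_mul h hh.continuous fun x => congrFun hc x)
    have hBc : Continuous fun x : ℂ => eval (x * f x) (∑ k ∈ s, C (cfun k) * X ^ k) :=
      ((∑ k ∈ s, C (cfun k) * X ^ k).continuous).comp (continuous_id.mul hf.continuous)
    have hB := LieAux.eq_zero_of_entire_mul (differentiable_id.mul hh) hBc hxid hA0
    have hq : (∑ k ∈ s, C (cfun k) * X ^ k) = 0 := by
      by_contra hq0
      have hroots := Polynomial.finite_setOf_isRoot hq0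
      have hsubr : Set.range (fun x : ℂ => x * f x)
          ⊆ {t | IsRoot (∑ k ∈ s, C (cfun k) * X ^ k) t} := by
        rintro _ ⟨x, rfl⟩
        exact hB x
      have hex : ∃ x₁ : ℂ, x₁ * f x₁ ≠ 0 := by
        by_contra hall
        push_neg at hall
        exact hf0 (LieAux.fun_eq_zero_of_mul f hf.continuous hall)
      obtain ⟨x₁, hx₁⟩ := hex
      exact LieAux.range_infinite (continuous_id.mul hf.continuous) (by simp) hx₁
        (hroots.subset hsubr)
    have hco := congrArg (fun r => coeff r n) hq
    simpa [finset_sum_coeff, coeff_C_mul, coeff_X_pow, Finset.sum_ite_eq, hn] using hco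
  -- OF is not a shear field combination
  have hOFnot : OF p f g ∉ Submodule.span ℂ (Set.range fun n : ℕ => SF p (LieAux.mf f h n)) := by
    intro hmem
    obtain ⟨m, hOFm⟩ := LieAux.span_SF_form p (LieAux.mf f h) _ hmem
    have h3 : ∀ x z : ℂ, x * (z * f x + g x) = x * m x := by
      intro x z
      have := congrArg (fun w : ℂ × ℂ × ℂ => w.2.2) (congrFun hOFm (x, 0, z))
      simpa [OF, SF] using this
    have hxf : ∀ x : ℂ, x * f x = 0 := by
      intro x
      have h0 := h3 x 0
      have h1 := h3 x 1
      linear_combination h1 - h0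
    exact hf0 (LieAux.fun_eq_zero_of_mul f hf.continuous hxf)
  refine ⟨hM, ?_, ?_⟩
  · rw [linearIndependent_option]
    exact ⟨hLIsf, hOFnot⟩
  · intro hFD
    have hw : LinearIndependent ℂ
        (fun n : ℕ => (⟨SF p (LieAux.mf f h n), hSFn n⟩ : lieGenerated {OF p f g, SF p h})) :=
      LinearIndependent.of_comp ((lieGenerated {OF p f g, SF p h}).subtype) hLIsf
    exact Module.Finite.not_linearIndependent_of_infinite _ hw
end
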